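/- arXiv:1911.00533 — 7 statements merged into one kernel-verified Lean document; each statement's English description precedes it below -/
import Mathlib

section
/- Let (X,d) be a metric space with a Borel regular doubling measure μ with constant C_d ≥ 1, let Ω ⊂ X be nonempty open with X∖Ω ≠ ∅, let λ ≥ 1, and let {B_j}_{j∈ℕ} with subordinate partition of unity {φ_j}_{j∈ℕ} be a Whitney covering of Ω with parameter λ and overlap constant C₀. Then for every u ∈ L¹(Ω), the discrete convolution u_W := Σ_j u_{B_j}·φ_j satisfies ‖u_W‖_{L¹(Ω)} ≤ C·‖u‖_{L¹(Ω)}, where C depends only on C_d and C₀. -/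
/-!
Bound `|u_W| ≤ Σ_j |u_{B_j}| φ_j` pointwise and integrate term by term. Since `0 ≤ φ_j ≤ 1`
is supported in `2B_j`, doubling gives `|u_{B_j}| ∫ φ_j ≤ C_d |u_{B_j}| μ(B_j) ≤ C_d ∫_{B_j} |u|`.
Every point of `Ω` lies in at most `C₀` of the balls `B_j ⊆ 20λB_j`, so
`Σ_j ∫_{B_j} |u| ≤ C₀ ∫_Ω |u|`, and `C = C_d C₀ + 1` works.
-/

open Metric MeasureTheory

/-- A Whitney covering of an open set `Ω` with parameter `lam`, overlap constant `C₀`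
and partition-of-unity Lipschitz parameter `c`: balls `B_j = B(x_j, r_j)` with
`x_j ∈ Ω`, `r_j = dist(x_j, X∖Ω)/(100 lam)`, covering `Ω`, with bounded overlap of the
dilated balls `20 lam B_j` and comparable radii of intersecting dilated balls, together
with a subordinate partition of unity `φ_j`. -/
structure WhitneyCovering (X : Type*) [MetricSpace X] (Ω : Set X)
    (lam : ℝ) (C₀ : ℕ) (c : ℝ) where
  center : ℕ → X
  radius : ℕ → ℝ
  phi : ℕ → X → ℝ
  center_mem : ∀ j, center j ∈ Ω
  radius_eq : ∀ j, radius j = infDist (center j) Ωᶜ / (100 * lam)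
  covers : Ω = ⋃ j, ball (center j) (radius j)
  overlap : ∀ k, {j | (ball (center k) (20 * lam * radius k) ∩
      ball (center j) (20 * lam * radius j)).Nonempty}.encard ≤ (C₀ : ℕ∞)
  radius_le : ∀ k j, (ball (center k) (20 * lam * radius k) ∩
      ball (center j) (20 * lam * radius j)).Nonempty → radius j ≤ 2 * radius k
  phi_nonneg : ∀ j p, 0 ≤ phi j p
  phi_le_one : ∀ j p, phi j p ≤ 1
  phi_lip : ∀ j p q, |phi j p - phi j q| ≤ (c / radius j) * dist p q
  phi_supp : ∀ j, Function.support (phi j) ⊆ ball (center j) (2 * radius j)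
  phi_sum : ∀ p ∈ Ω, ∑' j, phi j p = 1

/-- The discrete convolution `u_W = Σ_j u_{B_j} φ_j` of `u` with respect to a Whitney
covering. -/
noncomputable def discreteConv {X : Type*} [MetricSpace X] [MeasurableSpace X]
    (μ : Measure X) {Ω : Set X} {lam : ℝ} {C₀ : ℕ} {c : ℝ}
    (W : WhitneyCovering X Ω lam C₀ c) (u : X → ℝ) : X → ℝ :=
  fun p => ∑' j, (⨍ y in ball (W.center j) (W.radius j), u y ∂μ) * W.phi j p

open scoped ENNReal

theorem tsum_indicator_apply_eq_encard_mul {ι α : Type*} (s : ι → Set α) (f : α → ℝ≥0∞)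
    (x : α) : ∑' j, (s j).indicator f x = {j | x ∈ s j}.encard * f x := by
  calc ∑' j, (s j).indicator f x = ∑' j, {j | x ∈ s j}.indicator (fun _ => f x) j := rfl
    _ = ∑' _ : {j | x ∈ s j}, f x := (tsum_subtype _ _).symm
    _ = {j | x ∈ s j}.encard * f x := ENNReal.tsum_set_const _ _

theorem tsum_setLIntegral_le_of_encard_le {ι α : Type*} [Countable ι] [MeasurableSpace α]
    {μ : Measure α} {s : ι → Set α} {f : α → ℝ≥0∞} {N : ℕ∞} (hs : ∀ j, MeasurableSet (s j))
    (hf : AEMeasurable f μ) (hN : ∀ x, {j | x ∈ s j}.encard ≤ N) :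
    ∑' j, ∫⁻ x in s j, f x ∂μ ≤ N * ∫⁻ x, f x ∂μ := by
  calc ∑' j, ∫⁻ x in s j, f x ∂μ = ∫⁻ x, ∑' j, (s j).indicator f x ∂μ := by
        rw [lintegral_tsum fun j => hf.indicator (hs j)]
        exact tsum_congr fun j => (lintegral_indicator (hs j) f).symm
    _ ≤ ∫⁻ x, N * f x ∂μ := lintegral_mono fun x => by
        rw [tsum_indicator_apply_eq_encard_mul]
        gcongr
        exact_mod_cast hN x
    _ = N * ∫⁻ x, f x ∂μ := lintegral_const_mul'' _ hf

theorem enorm_setAverage_mul_measure_le {α E : Type*} [MeasurableSpace α]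
    [NormedAddCommGroup E] [NormedSpace ℝ E] (μ : Measure α) (s : Set α) (u : α → E) :
    ‖⨍ x in s, u x ∂μ‖ₑ * μ s ≤ ∫⁻ x in s, ‖u x‖ₑ ∂μ := by
  rcases eq_or_ne (μ s) ∞ with hs | hs
  · -- `μ.real s = 0`, so the average is the junk value `0`
    simp [setAverage_eq, measureReal_def, hs]
  · calc ‖⨍ x in s, u x ∂μ‖ₑ * μ s = ‖μ.real s • ⨍ x in s, u x ∂μ‖ₑ := by
          rw [enorm_smul, mul_comm, Real.enorm_eq_ofReal measureReal_nonneg, measureReal_def,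
            ENNReal.ofReal_toReal hs]
      _ = ‖∫ x in s, u x ∂μ‖ₑ := by rw [measure_smul_setAverage _ hs]
      _ ≤ ∫⁻ x in s, ‖u x‖ₑ ∂μ := enorm_integral_le_lintegral_enorm _

theorem lintegral_enorm_le_measure_of_support_subset {α E : Type*} [MeasurableSpace α]
    [NormedAddCommGroup E] {μ : Measure α} {φ : α → E} {s : Set α} (hφ : ∀ x, ‖φ x‖ ≤ 1)
    (hsupp : Function.support φ ⊆ s) : ∫⁻ x, ‖φ x‖ₑ ∂μ ≤ μ s := by
  refine (lintegral_mono fun x => ?_).trans (lintegral_indicator_one_le s)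
  by_cases hx : x ∈ s
  · rw [Set.indicator_of_mem hx, Pi.one_apply, ← ofReal_norm]
    exact ENNReal.ofReal_le_one.2 (hφ x)
  · simp [Function.notMem_support.1 fun h => hx (hsupp h)]

namespace WhitneyCovering

variable {X : Type*} [MetricSpace X] {Ω : Set X} {lam : ℝ} {C₀ : ℕ} {c : ℝ}
  (W : WhitneyCovering X Ω lam C₀ c)

theorem radius_nonneg (hlam : 0 ≤ lam) (j : ℕ) : 0 ≤ W.radius j := by
  rw [W.radius_eq]
  exact div_nonneg infDist_nonneg (by positivity)

theorem radius_pos (hΩ : IsOpen Ω) (hΩc : Ωᶜ.Nonempty) (hlam : 0 < lam) (j : ℕ) :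
    0 < W.radius j := by
  rw [W.radius_eq]
  refine div_pos ?_ (by positivity)
  exact (hΩ.isClosed_compl.notMem_iff_infDist_pos hΩc).1 (by simpa using W.center_mem j)

theorem ball_subset (hlam : 1 ≤ lam) (j : ℕ) : ball (W.center j) (W.radius j) ⊆ Ω := by
  refine (ball_subset_ball ?_).trans ball_infDist_compl_subset
  rw [W.radius_eq]
  exact div_le_self infDist_nonneg (by linarith)

theorem encard_setOf_mem_ball_le (hlam : 1 ≤ lam) (p : X) :
    {j | p ∈ ball (W.center j) (W.radius j)}.encard ≤ C₀ := by
  have dilate : ∀ j, ball (W.center j) (W.radius j) ⊆ ball (W.center j) (20 * lam * W.radius j) :=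
    fun j => ball_subset_ball (le_mul_of_one_le_left (W.radius_nonneg (by linarith) j)
      (by linarith))
  rcases Set.eq_empty_or_nonempty {j | p ∈ ball (W.center j) (W.radius j)} with h | ⟨k, hk⟩
  · rw [h, Set.encard_empty]
    exact zero_le
  · refine (Set.encard_le_encard ?_).trans (W.overlap k)
    exact fun j hj => ⟨p, dilate k hk, dilate j hj⟩

theorem continuous_phi (j : ℕ) : Continuous (W.phi j) :=
  (LipschitzWith.of_dist_le' fun p q => by
    simpa only [Real.dist_eq] using W.phi_lip j p q).continuous

variable [MeasurableSpace X] {μ : Measure X}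

theorem enorm_discreteConv_le (u : X → ℝ) (p : X) :
    ‖discreteConv μ W u p‖ₑ ≤
      ∑' j, ‖⨍ y in ball (W.center j) (W.radius j), u y ∂μ‖ₑ * ‖W.phi j p‖ₑ :=
  enorm_tsum_le_tsum_enorm.trans_eq (tsum_congr fun _ => enorm_mul _ _)

theorem enorm_average_mul_lintegral_phi_le {C_d : ℝ≥0∞} (u : X → ℝ) (j : ℕ)
    (hdoub : μ (ball (W.center j) (2 * W.radius j)) ≤ C_d * μ (ball (W.center j) (W.radius j))) :
    ‖⨍ y in ball (W.center j) (W.radius j), u y ∂μ‖ₑ * ∫⁻ p, ‖W.phi j p‖ₑ ∂μ ≤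
      C_d * ∫⁻ y in ball (W.center j) (W.radius j), ‖u y‖ₑ ∂μ := by
  set B := ball (W.center j) (W.radius j)
  have hφ : ∀ p, ‖W.phi j p‖ ≤ 1 := fun p => by
    rw [Real.norm_of_nonneg (W.phi_nonneg j p)]
    exact W.phi_le_one j p
  calc ‖⨍ y in B, u y ∂μ‖ₑ * ∫⁻ p, ‖W.phi j p‖ₑ ∂μ
      ≤ ‖⨍ y in B, u y ∂μ‖ₑ * μ (ball (W.center j) (2 * W.radius j)) := by
        gcongr
        exact lintegral_enorm_le_measure_of_support_subset hφ (W.phi_supp j)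
    _ ≤ ‖⨍ y in B, u y ∂μ‖ₑ * (C_d * μ B) := by gcongr
    _ = C_d * (‖⨍ y in B, u y ∂μ‖ₑ * μ B) := by ring
    _ ≤ C_d * ∫⁻ y in B, ‖u y‖ₑ ∂μ := by
        gcongr
        exact enorm_setAverage_mul_measure_le μ B u

theorem tsum_setLIntegral_ball_le [OpensMeasurableSpace X] (hlam : 1 ≤ lam) {f : X → ℝ≥0∞}
    (hf : AEMeasurable f (μ.restrict Ω)) :
    ∑' j, ∫⁻ p in ball (W.center j) (W.radius j), f p ∂μ ≤ C₀ * ∫⁻ p in Ω, f p ∂μ := by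
  have h := tsum_setLIntegral_le_of_encard_le (fun _ => measurableSet_ball) hf
    (W.encard_setOf_mem_ball_le hlam)
  simpa only [Measure.restrict_restrict measurableSet_ball,
    Set.inter_eq_self_of_subset_left (W.ball_subset hlam _), ENat.toENNReal_coe] using h

end WhitneyCovering

/-- For every `u ∈ L¹(Ω)`, the discrete convolution `u_W` with respect
to a Whitney covering of `Ω` satisfies `‖u_W‖_{L¹(Ω)} ≤ C ‖u‖_{L¹(Ω)}`, where `C`
depends only on the doubling constant `C_d` and the overlap constant `C₀`. -/
theorem discreteConv_L1_bound (C_d : ℝ) (hCd : 1 ≤ C_d) (C₀ : ℕ) :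
    ∃ C > (0 : ℝ), ∀ (X : Type) [MetricSpace X] [MeasurableSpace X] [BorelSpace X]
      (μ : Measure X),
      (∀ (x : X) (r : ℝ), 0 < r →
        0 < μ (ball x r) ∧ μ (ball x (2 * r)) ≤ ENNReal.ofReal C_d * μ (ball x r) ∧
          μ (ball x r) < ⊤) →
      ∀ (Ω : Set X), IsOpen Ω → Ω.Nonempty → Ωᶜ.Nonempty →
      ∀ (lam c : ℝ), 1 ≤ lam → 0 < c →
      ∀ (W : WhitneyCovering X Ω lam C₀ c),
      ∀ u : X → ℝ, IntegrableOn u Ω μ →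
        ∫⁻ p in Ω, ENNReal.ofReal |discreteConv μ W u p| ∂μ ≤
          ENNReal.ofReal C * ∫⁻ p in Ω, ENNReal.ofReal |u p| ∂μ := by
  refine ⟨C_d * C₀ + 1, by positivity, ?_⟩
  intro X _ _ _ μ hdoub Ω hΩ _ hΩc lam c hlam _ W u hu
  simp only [← Real.enorm_eq_ofReal_abs]
  set a := fun j => ⨍ y in ball (W.center j) (W.radius j), u y ∂μ
  have hφ : ∀ j, Measurable fun p => ‖W.phi j p‖ₑ := fun j =>
    (W.continuous_phi j).enorm.measurable
  calc ∫⁻ p in Ω, ‖discreteConv μ W u p‖ₑ ∂μ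
      ≤ ∫⁻ p, ∑' j, ‖a j‖ₑ * ‖W.phi j p‖ₑ ∂μ :=
        (setLIntegral_le_lintegral _ _).trans (lintegral_mono (W.enorm_discreteConv_le u))
    _ = ∑' j, ‖a j‖ₑ * ∫⁻ p, ‖W.phi j p‖ₑ ∂μ := by
        rw [lintegral_tsum fun j => ((hφ j).const_mul _).aemeasurable]
        exact tsum_congr fun j => lintegral_const_mul _ (hφ j)
    _ ≤ ∑' j, ENNReal.ofReal C_d * ∫⁻ y in ball (W.center j) (W.radius j), ‖u y‖ₑ ∂μ :=
        ENNReal.tsum_le_tsum fun j => W.enorm_average_mul_lintegral_phi_le u j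
          (hdoub _ _ (W.radius_pos hΩ hΩc (by linarith) j)).2.1
    _ ≤ ENNReal.ofReal C_d * (C₀ * ∫⁻ p in Ω, ‖u p‖ₑ ∂μ) := by
        rw [ENNReal.tsum_mul_left]
        gcongr
        exact W.tsum_setLIntegral_ball_le hlam hu.aestronglyMeasurable.enorm
    _ ≤ ENNReal.ofReal (C_d * C₀ + 1) * ∫⁻ p in Ω, ‖u p‖ₑ ∂μ := by
        rw [← mul_assoc, ← ENNReal.ofReal_natCast, ← ENNReal.ofReal_mul (by linarith)]
        gcongr
        linarith
end

section
/- Let (X,d) be a metric space, let Ω ⊂ X be nonempty open with X∖Ω ≠ ∅, and let λ ≥ 1. Let x_j, x_i ∈ Ω and set r_j := dist(x_j, X∖Ω)/(100λ) and r_i := dist(x_i, X∖Ω)/(100λ). Suppose x ∈ B(x_j, r_j), y ∈ B(x_i, r_i), dist(x, X∖Ω) ≤ dist(y, X∖Ω), and d(x,y) ≤ dist(x, X∖Ω)/(50λ). Then y ∈ B(x_j, 4r_j); in particular B(x_i, 20λr_i) ∩ B(x_j, 20λr_j) ≠ ∅. If moreover r_i ≤ 2r_j, then B(x_i, r_i)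 ⊂ B(x_j, 10r_j). -/
open Metric

/-! Since `infDist · Ωᶜ` is 1-Lipschitz, a point `x` of the Whitney ball `B(c, r)` with
`r = dist(c, X∖Ω)/(100λ)` has `dist(x, X∖Ω) ≤ (100λ + 1) r ≤ 150λ r`, so any `y` with
`d(x,y) ≤ dist(x, X∖Ω)/(50λ)` is within `3r` of `x`, hence within `4r` of `c`. The
remaining claims are the triangle inequality. -/

section Whitney

variable {X : Type*} [PseudoMetricSpace X] {s : Set X} {lam r : ℝ} {c x y : X}

lemma dist_le_three_mul_of_mem_whitney_ball (hlam : 1 ≤ lam)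
    (hr : r = infDist c s / (100 * lam)) (hx : x ∈ ball c r)
    (hxy : dist x y ≤ infDist x s / (50 * lam)) : dist x y ≤ 3 * r := by
  have hlam_pos : 0 < lam := one_pos.trans_le hlam
  have hr_pos : 0 < r := nonempty_ball.mp ⟨x, hx⟩
  have hc : infDist c s = 100 * lam * r := by
    rw [hr]; field_simp
  have hx_infDist : infDist x s ≤ (100 * lam + 1) * r := by
    have := infDist_le_infDist_add_dist (x := x) (y := c) (s := s)
    linarith [mem_ball.mp hx]
  calc dist x y ≤ infDist x s / (50 * lam) := hxy
    _ ≤ (100 * lam + 1) * r / (50 * lam) := by gcongr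
    _ ≤ 3 * r := by
      rw [div_le_iff₀ (by positivity)]
      linarith [mul_le_mul_of_nonneg_right hlam hr_pos.le]

lemma mem_ball_four_mul_of_mem_whitney_ball (hlam : 1 ≤ lam)
    (hr : r = infDist c s / (100 * lam)) (hx : x ∈ ball c r)
    (hxy : dist x y ≤ infDist x s / (50 * lam)) : y ∈ ball c (4 * r) := by
  have hxy' := dist_le_three_mul_of_mem_whitney_ball hlam hr hx hxy
  rw [mem_ball] at hx ⊢
  linarith [dist_triangle_left y c x]

end Whitney

lemma ball_subset_ball_ten_mul {X : Type*} [PseudoMetricSpace X] {c c' y : X} {r r' : ℝ}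
    (hy : y ∈ ball c (4 * r)) (hy' : y ∈ ball c' r') (hr' : r' ≤ 2 * r) :
    ball c' r' ⊆ ball c (10 * r) := by
  refine ball_subset_ball' ?_
  rw [mem_ball] at hy hy'
  linarith [dist_triangle c' y c, dist_comm c' y, dist_nonneg (x := y) (y := c)]

theorem whitney_ball_chain_general {X : Type*} [MetricSpace X] (Ω : Set X)
    (lam : ℝ) (hlam : 1 ≤ lam)
    (xj xi : X)
    (rj ri : ℝ)
    (hrj : rj = infDist xj Ωᶜ / (100 * lam))
    (x y : X) (hx : x ∈ ball xj rj) (hy : y ∈ ball xi ri)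
    (hxy : dist x y ≤ infDist x Ωᶜ / (50 * lam)) :
    y ∈ ball xj (4 * rj) ∧
    (ball xi (20 * lam * ri) ∩ ball xj (20 * lam * rj)).Nonempty ∧
    (ri ≤ 2 * rj → ball xi ri ⊆ ball xj (10 * rj)) := by
  have hy_j : y ∈ ball xj (4 * rj) := mem_ball_four_mul_of_mem_whitney_ball hlam hrj hx hxy
  have hri_nonneg : 0 ≤ ri := (nonempty_ball.mp ⟨y, hy⟩).le
  have hrj_nonneg : 0 ≤ rj := (nonempty_ball.mp ⟨x, hx⟩).le
  refine ⟨hy_j, ⟨y, ball_subset_ball ?_ hy, ball_subset_ball ?_ hy_j⟩,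
    ball_subset_ball_ten_mul hy_j hy⟩
  · nlinarith
  · nlinarith

/-- The key geometric step for Whitney coverings: if
`r_j = dist(x_j, X∖Ω)/(100 lam)`, `r_i = dist(x_i, X∖Ω)/(100 lam)`, `x ∈ B(x_j,r_j)`,
`y ∈ B(x_i,r_i)`, `dist(x,X∖Ω) ≤ dist(y,X∖Ω)` and `d(x,y) ≤ dist(x,X∖Ω)/(50 lam)`,
then `y ∈ B(x_j,4r_j)`, hence `B(x_i,20 lam r_i)` meets `B(x_j,20 lam r_j)`; and if
moreover `r_i ≤ 2 r_j` then `B(x_i,r_i) ⊆ B(x_j,10 r_j)`. -/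
theorem whitney_ball_chain {X : Type*} [MetricSpace X] (Ω : Set X)
    (hΩ : IsOpen Ω) (hne : Ω.Nonempty) (hcne : Ωᶜ.Nonempty)
    (lam : ℝ) (hlam : 1 ≤ lam)
    (xj xi : X) (hxj : xj ∈ Ω) (hxi : xi ∈ Ω)
    (rj ri : ℝ)
    (hrj : rj = infDist xj Ωᶜ / (100 * lam))
    (hri : ri = infDist xi Ωᶜ / (100 * lam))
    (x y : X) (hx : x ∈ ball xj rj) (hy : y ∈ ball xi ri)
    (hdd : infDist x Ωᶜ ≤ infDist y Ωᶜ)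
    (hxy : dist x y ≤ infDist x Ωᶜ / (50 * lam)) :
    y ∈ ball xj (4 * rj) ∧
    (ball xi (20 * lam * ri) ∩ ball xj (20 * lam * rj)).Nonempty ∧
    (ri ≤ 2 * rj → ball xi ri ⊆ ball xj (10 * rj)) :=
  whitney_ball_chain_general Ω lam hlam xj xi rj ri hrj x y hx hy hxy
end

section
/- Let (X,d) be a metric space, let Ω ⊂ X be a uniform domain with constant c_U ∈ (0,1] and X∖Ω ≠ ∅, and let M ≥ 1. Then there exist constants c' ≥ 1 and C' ≥ 1, depending only on M and c_U, such that for every pair of distinct points x, y ∈ Ω there is a chain of balls B_k = B(z_k, r_k), k ∈ ℤ, with z_k ∈ Ω and r_k > 0, satisfying: (i) B(z_k, M·r_k) ⊂ Ω for every k; (ii) r_k ≥ (1/c')·min{d(z_k, x), d(z_k, y)} for every k; (iii) B_k ∩ B_{k+1} ≠ ∅ for every k; (iv) r_k/2 ≤ r_{k+1} ≤ 2r_k for every k; (v) dist(x, B_k) → 0 as k → +∞ and dist(y, B_k) → 0 as k → −∞; (vi) Σ_{k∈ℤ} r_k ≤ C'·d(x,y). -/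
/-!
Follow the uniform curve `γ : [0, L] → Ω` from `x = γ 0` to `y = γ L`. Starting at the midpoint,
choose parameters `t_k` that approach `0` geometrically as `k → +∞` and `L` as `k → -∞`, so that
the parameter distance to the nearer endpoint is `s_k = (L / 2) l ^ |k|`. Put
`B_k = B(γ t_k, ρ s_k)` with `ρ = c_U / (2M)`: the cigar condition gives `M B_k ⊆ Ω`, and since `γ`
is `1`-Lipschitz the centre lies within `s_k` of `x` or of `y`. With `l = 1 - ρ / 2`, the step
`|t_{k+1} - t_k| ≤ (1 - l)(s_k + s_{k+1})` is shorter than `r_k + r_{k+1}`, so consecutive balls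
meet along `γ`, and `∑ r_k = ρ (L / 2)(1 + l) / (1 - l) = L (1 + l) ≤ 2L ≤ (2 / c_U) d(x, y)`.
-/

open Metric Filter

/-- A domain `Ω` is uniform with constant `c_U ∈ (0,1]` if every pair of distinct
points `x, y ∈ Ω` can be joined by an arc-length parametrized (i.e. `1`-Lipschitz)
curve `γ : [0, L] → Ω` with `γ 0 = x`, `γ L = y`, `L ≤ c_U⁻¹ d(x,y)` and
`dist(γ t, X∖Ω) ≥ c_U min{t, L - t}` for all `t ∈ [0, L]`. -/
def IsUniformDomain {X : Type*} [MetricSpace X] (Ω : Set X) (cU : ℝ) : Prop :=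
  ∀ x ∈ Ω, ∀ y ∈ Ω, x ≠ y →
    ∃ (γ : ℝ → X) (L : ℝ), 0 ≤ L ∧ γ 0 = x ∧ γ L = y ∧ L ≤ cU⁻¹ * dist x y ∧
      (∀ t ∈ Set.Icc (0 : ℝ) L, γ t ∈ Ω) ∧
      LipschitzOnWith 1 γ (Set.Icc (0 : ℝ) L) ∧
      ∀ t ∈ Set.Icc (0 : ℝ) L, cU * min t (L - t) ≤ infDist (γ t) Ωᶜ

open Set Topology

theorem LipschitzOnWith.nonempty_ball_inter_ball {X E : Type*} [PseudoMetricSpace X]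
    [SeminormedAddCommGroup E] [NormedSpace ℝ E] {s : Set E} {f : E → X}
    (hf : LipschitzOnWith 1 f s) (hs : Convex ℝ s) {a b : E} (ha : a ∈ s) (hb : b ∈ s)
    {ra rb : ℝ} (hra : 0 < ra) (hrb : 0 < rb) (hab : dist a b < ra + rb) :
    (ball (f a) ra ∩ ball (f b) rb).Nonempty := by
  have hsum : 0 < ra + rb := by positivity
  set v := AffineMap.lineMap a b (ra / (ra + rb))
  have hv : v ∈ s :=
    hs.lineMap_mem ha hb ⟨by positivity, div_le_one_of_le₀ (by linarith) hsum.le⟩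
  have hcompl : 1 - ra / (ra + rb) = rb / (ra + rb) := by field_simp; ring
  refine ⟨f v, ?_, ?_⟩
  · calc dist (f v) (f a) ≤ dist v a := by simpa using hf.dist_le_mul _ hv _ ha
      _ = ra / (ra + rb) * dist a b := by
          rw [dist_lineMap_left, Real.norm_of_nonneg (by positivity)]
      _ < ra := by rwa [div_mul_comm, mul_lt_iff_lt_one_left hra, div_lt_one hsum]
  · calc dist (f v) (f b) ≤ dist v b := by simpa using hf.dist_le_mul _ hv _ hb
      _ = rb / (ra + rb) * dist a b := by
          rw [dist_lineMap_right, hcompl, Real.norm_of_nonneg (by positivity)]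
      _ < rb := by rwa [div_mul_comm, mul_lt_iff_lt_one_left hrb, div_lt_one hsum]

theorem hasSum_pow_natAbs {l : ℝ} (hl₀ : 0 ≤ l) (hl₁ : l < 1) :
    HasSum (fun k : ℤ => l ^ k.natAbs) ((1 + l) / (1 - l)) := by
  have hgeom := hasSum_geometric_of_lt_one hl₀ hl₁
  have hneg : HasSum (fun n : ℕ => l ^ (-(n + 1 : ℤ)).natAbs) (l * (1 - l)⁻¹) := by
    refine (hgeom.mul_left l).congr_fun fun n => ?_
    rw [show (-(n + 1 : ℤ)).natAbs = n + 1 by omega, pow_succ']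
  convert HasSum.of_nat_of_neg_add_one (f := fun k : ℤ => l ^ k.natAbs) hgeom hneg using 1
  field_simp

noncomputable def chainDepth (L l : ℝ) (k : ℤ) : ℝ := L / 2 * l ^ k.natAbs

noncomputable def chainTime (L l : ℝ) (k : ℤ) : ℝ :=
  if 0 ≤ k then chainDepth L l k else L - chainDepth L l k

section Chain

variable {L l : ℝ} {k : ℤ}

theorem chainDepth_nonneg (hL : 0 ≤ L) (hl : 0 ≤ l) : 0 ≤ chainDepth L l k := by
  unfold chainDepth; positivity

theorem chainDepth_pos (hL : 0 < L) (hl : 0 < l) : 0 < chainDepth L l k := by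
  unfold chainDepth; positivity

theorem chainDepth_le_half (hL : 0 ≤ L) (hl₀ : 0 ≤ l) (hl₁ : l ≤ 1) :
    chainDepth L l k ≤ L / 2 :=
  mul_le_of_le_one_right (by positivity) (pow_le_one₀ hl₀ hl₁)

theorem chainDepth_mul_left (c : ℝ) : chainDepth (c * L) l k = c * chainDepth L l k := by
  unfold chainDepth; ring

theorem chainDepth_succ (k : ℤ) :
    chainDepth L l (k + 1) = l * chainDepth L l k ∨
      chainDepth L l k = l * chainDepth L l (k + 1) := by
  unfold chainDepth
  rcases (by omega : (k + 1).natAbs = k.natAbs + 1 ∨ k.natAbs = (k + 1).natAbs + 1) with h | h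
  · left; rw [h, pow_succ']; ring
  · right; rw [h, pow_succ']; ring

theorem hasSum_chainDepth (hl₀ : 0 ≤ l) (hl₁ : l < 1) :
    HasSum (chainDepth L l) (L / 2 * ((1 + l) / (1 - l))) :=
  (hasSum_pow_natAbs hl₀ hl₁).mul_left (L / 2)

theorem chainDepth_succ_mem_Icc (hL : 0 ≤ L) (hl₀ : 1 / 2 ≤ l) (hl₁ : l ≤ 1) (k : ℤ) :
    chainDepth L l (k + 1) ∈ Icc (chainDepth L l k / 2) (2 * chainDepth L l k) := by
  have h₀ := chainDepth_nonneg (l := l) (k := k) hL (by linarith)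
  have h₁ := chainDepth_nonneg (l := l) (k := k + 1) hL (by linarith)
  rcases chainDepth_succ (L := L) (l := l) k with h | h <;> rw [h] <;> constructor <;> nlinarith

theorem abs_chainDepth_succ_sub_le (hL : 0 ≤ L) (hl₀ : 0 ≤ l) (hl₁ : l ≤ 1) (k : ℤ) :
    |chainDepth L l (k + 1) - chainDepth L l k| ≤
      (1 - l) * (chainDepth L l k + chainDepth L l (k + 1)) := by
  have h₀ := chainDepth_nonneg (l := l) (k := k) hL (by linarith)
  have h₁ := chainDepth_nonneg (l := l) (k := k + 1) hL (by linarith)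
  rcases chainDepth_succ (L := L) (l := l) k with h | h <;> rw [h]
  · rw [abs_sub_comm, abs_of_nonneg (by nlinarith)]
    nlinarith [mul_nonneg (mul_nonneg (sub_nonneg.2 hl₁) hl₀) h₀]
  · rw [abs_of_nonneg (by nlinarith)]
    nlinarith [mul_nonneg (mul_nonneg (sub_nonneg.2 hl₁) hl₀) h₁]

theorem chainTime_of_nonneg (hk : 0 ≤ k) : chainTime L l k = chainDepth L l k := if_pos hk

theorem sub_chainTime_of_nonpos (hk : k ≤ 0) : L - chainTime L l k = chainDepth L l k := by
  unfold chainTime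
  split_ifs with h
  · obtain rfl : k = 0 := le_antisymm hk h
    simp [chainDepth]; ring
  · ring

theorem chainTime_mem_Icc (hL : 0 ≤ L) (hl₀ : 0 ≤ l) (hl₁ : l ≤ 1) :
    chainTime L l k ∈ Icc 0 L := by
  have h₀ := chainDepth_nonneg (k := k) hL hl₀
  have h₁ := chainDepth_le_half (k := k) hL hl₀ hl₁
  unfold chainTime; split_ifs <;> constructor <;> linarith

theorem min_chainTime (hL : 0 ≤ L) (hl₀ : 0 ≤ l) (hl₁ : l ≤ 1) :
    min (chainTime L l k) (L - chainTime L l k) = chainDepth L l k := by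
  have h := chainDepth_le_half (k := k) hL hl₀ hl₁
  unfold chainTime; split_ifs
  · exact min_eq_left (by linarith)
  · rw [sub_sub_cancel]; exact min_eq_right (by linarith)

theorem dist_chainTime_succ (k : ℤ) :
    dist (chainTime L l (k + 1)) (chainTime L l k) =
      |chainDepth L l (k + 1) - chainDepth L l k| := by
  rw [Real.dist_eq]
  rcases le_or_gt 0 k with hk | hk
  · rw [chainTime_of_nonneg hk, chainTime_of_nonneg (by omega)]
  · rw [← sub_chainTime_of_nonpos (L := L) (l := l) hk.le,
      ← sub_chainTime_of_nonpos (L := L) (l := l) (by omega : k + 1 ≤ 0), abs_sub_comm]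
    congr 1; ring

end Chain

theorem LipschitzOnWith.dist_endpoints_le {X : Type*} [PseudoMetricSpace X] {γ : ℝ → X}
    {L t : ℝ} (hγ : LipschitzOnWith 1 γ (Icc 0 L)) (ht : t ∈ Icc 0 L) :
    dist (γ t) (γ 0) ≤ t ∧ dist (γ t) (γ L) ≤ L - t := by
  have hL : 0 ≤ L := ht.1.trans ht.2
  constructor
  · simpa [Real.dist_eq, abs_of_nonneg ht.1] using hγ.dist_le_mul t ht 0 ⟨le_rfl, hL⟩
  · simpa [Real.dist_eq, abs_of_nonpos (sub_nonpos.2 ht.2)] using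
      hγ.dist_le_mul t ht L ⟨hL, le_rfl⟩

theorem exists_ball_chain_of_cigar_curve {X : Type*} [MetricSpace X] {Ω : Set X}
    {γ : ℝ → X} {L cU M : ℝ} (hcU : 0 < cU) (hM : 0 < M) (hcUM : cU ≤ 2 * M) (hL : 0 < L)
    (hγ : LipschitzOnWith 1 γ (Icc 0 L))
    (hcigar : ∀ t ∈ Icc 0 L, cU * min t (L - t) ≤ infDist (γ t) Ωᶜ) :
    ∃ (z : ℤ → X) (r : ℤ → ℝ),
      (∀ k, z k ∈ Ω) ∧ (∀ k, 0 < r k) ∧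
      (∀ k, ball (z k) (M * r k) ⊆ Ω) ∧
      (∀ k, cU / (2 * M) * min (dist (z k) (γ 0)) (dist (z k) (γ L)) ≤ r k) ∧
      (∀ k, (ball (z k) (r k) ∩ ball (z (k + 1)) (r (k + 1))).Nonempty) ∧
      (∀ k, r k / 2 ≤ r (k + 1) ∧ r (k + 1) ≤ 2 * r k) ∧
      Tendsto (fun k => infDist (γ 0) (ball (z k) (r k))) atTop (𝓝 0) ∧
      Tendsto (fun k => infDist (γ L) (ball (z k) (r k))) atBot (𝓝 0) ∧
      Summable r ∧ ∑' k, r k ≤ 2 * L := by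
  set ρ := cU / (2 * M) with hρ_def
  set l := 1 - ρ / 2 with hl_def
  have hρ : 0 < ρ := by positivity
  have hρ₁ : ρ ≤ 1 := (div_le_one (by positivity)).2 hcUM
  have hl₀ : 0 ≤ l := by linarith
  have hl₁ : l < 1 := by linarith
  set t := chainTime L l
  set r := chainDepth (ρ * L) l
  have hr_eq (k : ℤ) : r k = ρ * chainDepth L l k := chainDepth_mul_left ρ
  have ht (k : ℤ) : t k ∈ Icc 0 L := chainTime_mem_Icc hL.le hl₀ hl₁.le
  have hmin (k : ℤ) : min (t k) (L - t k) = chainDepth L l k := min_chainTime hL.le hl₀ hl₁.le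
  have hr (k : ℤ) : 0 < r k := chainDepth_pos (by positivity) (by linarith)
  have hball (k : ℤ) : ball (γ (t k)) (M * r k) ⊆ Ω := by
    refine (ball_subset_ball ?_).trans ball_infDist_compl_subset
    calc M * r k = cU / 2 * chainDepth L l k := by
          rw [hr_eq, hρ_def]; field_simp
      _ ≤ cU * min (t k) (L - t k) := by
          rw [hmin]; linarith [mul_nonneg hcU.le (chainDepth_nonneg (k := k) hL.le hl₀)]
      _ ≤ infDist (γ (t k)) Ωᶜ := hcigar _ (ht k)
  have hsum : HasSum r (L * (1 + l)) := by
    convert hasSum_chainDepth hl₀ hl₁ using 1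
    rw [show 1 - l = ρ / 2 by rw [hl_def]; ring]; field_simp
  have hdepth_lim := (hasSum_chainDepth (L := L) hl₀ hl₁).summable.tendsto_cofinite_zero
  refine ⟨fun k => γ (t k), r, fun k => hball k (mem_ball_self (by nlinarith [hr k])), hr,
    hball, fun k => ?_, fun k => ?_,
    chainDepth_succ_mem_Icc (by positivity) (by linarith) hl₁.le, ?_, ?_, hsum.summable, ?_⟩
  · rw [hr_eq, ← hmin k]
    exact mul_le_mul_of_nonneg_left (min_le_min (hγ.dist_endpoints_le (ht k)).1
      (hγ.dist_endpoints_le (ht k)).2) hρ.le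
  · refine hγ.nonempty_ball_inter_ball (convex_Icc 0 L) (ht k) (ht (k + 1)) (hr k) (hr _) ?_
    rw [dist_comm, dist_chainTime_succ, hr_eq, hr_eq, ← mul_add]
    calc _ ≤ (1 - l) * (chainDepth L l k + chainDepth L l (k + 1)) :=
          abs_chainDepth_succ_sub_le hL.le hl₀ hl₁.le k
      _ < ρ * (chainDepth L l k + chainDepth L l (k + 1)) :=
          mul_lt_mul_of_pos_right (by linarith)
            (add_pos (chainDepth_pos hL (by linarith)) (chainDepth_pos hL (by linarith)))
  · refine squeeze_zero' (.of_forall fun _ => infDist_nonneg) ?_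
      (hdepth_lim.mono_left atTop_le_cofinite)
    filter_upwards [eventually_ge_atTop 0] with k hk
    calc _ ≤ dist (γ 0) (γ (t k)) := infDist_le_dist_of_mem (mem_ball_self (hr k))
      _ ≤ t k := by rw [dist_comm]; exact (hγ.dist_endpoints_le (ht k)).1
      _ = chainDepth L l k := chainTime_of_nonneg hk
  · refine squeeze_zero' (.of_forall fun _ => infDist_nonneg) ?_
      (hdepth_lim.mono_left atBot_le_cofinite)
    filter_upwards [eventually_le_atBot 0] with k hk
    calc _ ≤ dist (γ L) (γ (t k)) := infDist_le_dist_of_mem (mem_ball_self (hr k))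
      _ ≤ L - t k := by rw [dist_comm]; exact (hγ.dist_endpoints_le (ht k)).2
      _ = chainDepth L l k := sub_chainTime_of_nonpos hk
  · rw [hsum.tsum_eq]; nlinarith

/-- In a uniform domain `Ω` with constant `c_U`, for every `M ≥ 1`
there exist constants `c' ≥ 1` and `C' ≥ 1`, depending only on `M` and `c_U`, such that
every pair of distinct points `x, y ∈ Ω` can be joined by a chain of balls
`B_k = B(z_k, r_k)`, `k ∈ ℤ`, resembling a cigar: `M B_k ⊆ Ω`,
`r_k ≥ c'⁻¹ min{d(z_k,x), d(z_k,y)}`, consecutive balls intersect, radii of consecutive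
balls are `2`-comparable, the chain converges to `x` as `k → +∞` and to `y` as
`k → −∞`, and `Σ_k r_k ≤ C' d(x,y)`. -/
theorem uniform_domain_chain (M cU : ℝ) (hM : 1 ≤ M) (hcU : cU ∈ Set.Ioc (0 : ℝ) 1) :
    ∃ c' ≥ (1 : ℝ), ∃ C' ≥ (1 : ℝ),
      ∀ (X : Type) [MetricSpace X] (Ω : Set X), IsOpen Ω → IsConnected Ω →
        Ωᶜ.Nonempty → IsUniformDomain Ω cU →
      ∀ x ∈ Ω, ∀ y ∈ Ω, x ≠ y →
        ∃ (z : ℤ → X) (r : ℤ → ℝ),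
          (∀ k, z k ∈ Ω) ∧ (∀ k, 0 < r k) ∧
          (∀ k, ball (z k) (M * r k) ⊆ Ω) ∧
          (∀ k, (1 / c') * min (dist (z k) x) (dist (z k) y) ≤ r k) ∧
          (∀ k, (ball (z k) (r k) ∩ ball (z (k + 1)) (r (k + 1))).Nonempty) ∧
          (∀ k, r k / 2 ≤ r (k + 1) ∧ r (k + 1) ≤ 2 * r k) ∧
          Tendsto (fun k => infDist x (ball (z k) (r k))) atTop (nhds 0) ∧
          Tendsto (fun k => infDist y (ball (z k) (r k))) atBot (nhds 0) ∧
          Summable r ∧ ∑' k, r k ≤ C' * dist x y := by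
  obtain ⟨hcU₀, hcU₁⟩ := hcU
  refine ⟨2 * M / cU, (le_div_iff₀ hcU₀).2 (by linarith),
    2 / cU, (le_div_iff₀ hcU₀).2 (by linarith), fun X _ Ω _ _ _ hΩ x hx y hy hxy => ?_⟩
  obtain ⟨γ, L, hL₀, rfl, rfl, hLd, -, hγ, hcigar⟩ := hΩ x hx y hy hxy
  have hL : 0 < L := hL₀.lt_of_ne (by rintro rfl; exact hxy rfl)
  obtain ⟨z, r, hzΩ, hr, hball, hcenter, hinter, hratio, hlim₀, hlimL, hsum, htsum⟩ :=
    exists_ball_chain_of_cigar_curve (M := M) hcU₀ (by linarith) (by linarith) hL hγ hcigar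
  refine ⟨z, r, hzΩ, hr, hball, by simpa only [one_div_div] using hcenter, hinter, hratio,
    hlim₀, hlimL, hsum, htsum.trans ?_⟩
  rw [div_mul_eq_mul_div, le_div_iff₀ hcU₀]
  linarith [(le_inv_mul_iff₀ hcU₀).1 hLd]
end

section
/- Let (X,d) be a complete geodesic metric space (i.e. every pair of points x, y ∈ X can be joined by a curve in X of length d(x,y)) equipped with a Borel regular doubling measure μ with constant C_d ≥ 1, and let Ω ⊂ X be nonempty open with X∖Ω ≠ ∅. Then for any two constants 0 < c₁, c₂ < 1, one has M^{1,1}_{c₁}(Ω) = M^{1,1}_{c₂}(Ω) with equivalent norms, where the equivalence constants depend only on C_d, c₁, and c₂. -/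
/-!
Given a Hajłasz gradient `g` for the constant `c_a`, let `H(x)` be the average of `g` over the
Whitney ball `B(x, (3/4) c_b dist(x, X∖Ω))`. A point `z` belongs to the Whitney balls of only those
`x` that lie in one ball around `z` of measure comparable to theirs, so by Tonelli and doubling
`‖H‖₁ ≤ C_d³ ‖g‖₁`.

If `c_a m < d(x, y) ≤ c_b m`, where `m` is the smaller of the distances of `x, y` to `X∖Ω`, cut a
geodesic from `x` to `y` into `N ≈ 1 / c_a` pieces. Near each cut point choose a point off the
exceptional set at which `g` is at most its average over a ball of radius `d(x, y)/2N`; by doubling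
that average is at most `C_dᵏ H` at the nearer of `x, y`. Consecutive chosen points are close
enough, relative to their distance to `X∖Ω`, for the `c_a`-inequality, and summing along the chain
shows that `4g + 4C_dᵏ H` is a Hajłasz gradient for the constant `c_b`.
-/

open Metric MeasureTheory

/-- `g` is an admissible restricted Hajłasz gradient of `u` on `Ω` with parameter
`c_H`: `g ≥ 0`, `g ∈ L¹(Ω)`, and the Hajłasz inequality
`|u(x) − u(y)| ≤ d(x,y)(g(x)+g(y))` holds off a `μ`-null set `A ⊆ Ω` for all points
with `d(x,y) ≤ c_H min{dist(x,X∖Ω), dist(y,X∖Ω)}`. -/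
def HajlaszAdmissibleLoc {X : Type*} [MetricSpace X] [MeasurableSpace X]
    (μ : Measure X) (Ω : Set X) (cH : ℝ) (u g : X → ℝ) : Prop :=
  (∀ p, 0 ≤ g p) ∧ IntegrableOn g Ω μ ∧
    ∃ A : Set X, A ⊆ Ω ∧ μ A = 0 ∧
      ∀ x ∈ Ω \ A, ∀ y ∈ Ω \ A,
        dist x y ≤ cH * min (infDist x Ωᶜ) (infDist y Ωᶜ) →
        |u x - u y| ≤ dist x y * (g x + g y)

open Set
open scoped ENNReal

theorem ENNReal.inv_le_mul_inv_of_le_mul {a b c : ℝ≥0∞} (ha : a ≠ 0) (ha' : a ≠ ∞)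
    (h : a ≤ c * b) : b⁻¹ ≤ c * a⁻¹ :=
  calc b⁻¹ = b⁻¹ * (a * a⁻¹) := by rw [ENNReal.mul_inv_cancel ha ha', mul_one]
    _ ≤ b⁻¹ * (c * b * a⁻¹) := by gcongr
    _ = c * a⁻¹ * (b⁻¹ * b) := by ring
    _ ≤ c * a⁻¹ := mul_le_of_le_one_right' (ENNReal.inv_mul_le_one b)

namespace MeasureTheory

variable {α : Type*} [MeasurableSpace α] {μ : Measure α}

theorem setLAverage_le_mul_setLAverage {s t : Set α} {c : ℝ≥0∞} (f : α → ℝ≥0∞) (hst : s ⊆ t)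
    (hs : μ s ≠ 0) (ht : μ t ≠ ∞) (hμ : μ t ≤ c * μ s) :
    ⨍⁻ x in s, f x ∂μ ≤ c * ⨍⁻ x in t, f x ∂μ := by
  simp only [setLAverage_eq, div_eq_mul_inv]
  calc (∫⁻ x in s, f x ∂μ) * (μ s)⁻¹ ≤ (∫⁻ x in t, f x ∂μ) * (c * (μ t)⁻¹) :=
        mul_le_mul' (lintegral_mono_set hst) (ENNReal.inv_le_mul_inv_of_le_mul
          (measure_mono hst |>.trans_lt' (pos_iff_ne_zero.2 hs)).ne' ht hμ)
    _ = c * ((∫⁻ x in t, f x ∂μ) * (μ t)⁻¹) := by ring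

theorem exists_mem_notMem_le_setLAverage {s N : Set α} {f : α → ℝ≥0∞} (hs : MeasurableSet s)
    (hμs : μ s ≠ 0) (hμs' : μ s ≠ ∞) (hN : μ N = 0) (hf : AEMeasurable f (μ.restrict s)) :
    ∃ x ∈ s, x ∉ N ∧ f x ≤ ⨍⁻ y in s, f y ∂μ := by
  have hnull : μ.restrict s (N ∪ sᶜ) = 0 :=
    measure_union_null (Measure.restrict_le_self.absolutelyContinuous hN) (ae_restrict_mem hs)
  have : IsFiniteMeasure (μ.restrict s) := isFiniteMeasure_restrict.2 hμs'
  obtain ⟨x, hx, hfx⟩ :=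
    exists_notMem_null_le_laverage (by rwa [Ne, Measure.restrict_eq_zero]) hf hnull
  simp only [mem_union, mem_compl_iff, not_or, not_not] at hx
  exact ⟨x, hx.2, hx.1, hfx⟩

end MeasureTheory

def IsGeodesicSpace (X : Type*) [MetricSpace X] : Prop :=
  ∀ x y : X, ∃ γ : ℝ → X, γ 0 = x ∧ γ (dist x y) = y ∧ LipschitzOnWith 1 γ (Icc 0 (dist x y))

section Metric

variable {X : Type*} [MetricSpace X]

theorem exists_chain_of_lipschitzOnWith {x y : X} {γ : ℝ → X} (hγ0 : γ 0 = x)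
    (hγ1 : γ (dist x y) = y) (hγ : LipschitzOnWith 1 γ (Icc 0 (dist x y))) {N : ℕ}
    (hN : 0 < N) :
    ∃ z : ℕ → X, z 0 = x ∧ z N = y ∧ (∀ i < N, dist (z i) (z (i + 1)) ≤ dist x y / N) ∧
      ∀ i ≤ N, ∃ P ∈ ({x, y} : Set X), dist (z i) P ≤ dist x y / 2 := by
  set d := dist x y
  have hNd : (N : ℝ) * (d / N) = d := mul_div_cancel₀ d (by positivity)
  have hmem : ∀ i ≤ N, (i : ℝ) * (d / N) ∈ Icc 0 d := fun i hi =>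
    ⟨by positivity,
      (mul_le_mul_of_nonneg_right (by exact_mod_cast hi) (by positivity)).trans hNd.le⟩
  have hdist : ∀ i ≤ N, ∀ j ≤ N,
      dist (γ (i * (d / N))) (γ (j * (d / N))) ≤ |(i : ℝ) - j| * (d / N) := fun i hi j hj => by
    simpa [Real.dist_eq, ← sub_mul, abs_mul, abs_of_nonneg (by positivity : 0 ≤ d / N)]
      using hγ.dist_le_mul _ (hmem i hi) _ (hmem j hj)
  refine ⟨fun i => γ (i * (d / N)), by simpa using hγ0, by simpa [hNd] using hγ1,
    fun i hi => by simpa using hdist i hi.le (i + 1) hi, fun i hi => ?_⟩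
  have hi' : (i : ℝ) ≤ N := by exact_mod_cast hi
  have hhalf : (N : ℝ) / 2 * (d / N) = d / 2 := by field_simp
  rcases le_or_gt (2 * i) N with h2i | h2i
  · have h2i' : 2 * (i : ℝ) ≤ N := by exact_mod_cast h2i
    have := hdist i hi 0 N.zero_le
    rw [Nat.cast_zero, zero_mul, hγ0, sub_zero, Nat.abs_cast] at this
    exact ⟨x, by simp, this.trans (hhalf ▸ by gcongr; linarith)⟩
  · have h2i' : (N : ℝ) < 2 * i := by exact_mod_cast h2i
    have := hdist i hi N le_rfl
    rw [hNd, hγ1, abs_of_nonpos (sub_nonpos.2 hi')] at this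
    exact ⟨y, by simp, this.trans (hhalf ▸ by gcongr; linarith)⟩

theorem infDist_mem_Icc_of_mem_pair (s : Set X) {x y P : X} (hP : P ∈ ({x, y} : Set X)) :
    infDist P s ∈ Icc (min (infDist x s) (infDist y s))
      (min (infDist x s) (infDist y s) + dist x y) := by
  have hxy : infDist x s ≤ infDist y s + dist x y := infDist_le_infDist_add_dist
  have hyx : infDist y s ≤ infDist x s + dist x y :=
    infDist_le_infDist_add_dist.trans_eq (by rw [dist_comm])
  have hd : 0 ≤ dist x y := dist_nonneg
  rcases hP with hP | hP <;> rw [hP] <;> refine ⟨by simp, ?_⟩ <;>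
    rw [← min_add_add_right] <;> exact le_min (by linarith) (by linarith)

theorem mem_ball_infDist_and_subset_of_mem_ball_infDist {s : Set X} {x z : X} {β : ℝ}
    (hβ : β ≤ 3 / 4) (h : z ∈ ball x (β * infDist x s)) :
    x ∈ ball z (4 * β * infDist z s) ∧
      ball z (4 * β * infDist z s) ⊆ ball x (2 ^ 3 * (β * infDist x s)) := by
  rw [mem_ball] at h ⊢
  have hxz : infDist x s ≤ infDist z s + dist z x :=
    dist_comm z x ▸ infDist_le_infDist_add_dist
  have hzx : infDist z s ≤ infDist x s + dist z x := infDist_le_infDist_add_dist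
  have hβ0 : 0 < β := pos_of_mul_pos_left (dist_nonneg.trans_lt h) infDist_nonneg
  refine ⟨?_, ball_subset_ball' ?_⟩
  · rw [dist_comm]; nlinarith [dist_nonneg (x := z) (y := x)]
  · nlinarith [dist_nonneg (x := z) (y := x)]

end Metric

variable {X : Type*} [MetricSpace X] [MeasurableSpace X]

theorem secondCountableTopology_of_measure_ball_pos (μ : Measure X) [OpensMeasurableSpace X]
    [SFinite μ] (hμ : ∀ (x : X) (r : ℝ), 0 < r → 0 < μ (ball x r)) :
    SecondCountableTopology X := by
  refine secondCountable_of_almost_dense_set fun ε hε => ?_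
  obtain ⟨s, -, hmax⟩ := zorn_subset_nonempty {s : Set X | s.Pairwise (ε < dist · ·)}
    (fun c hcS hchain _ => ⟨⋃₀ c, hchain.pairwise_sUnion.2 hcS, fun _ => subset_sUnion_of_mem⟩)
    ∅ (by simp)
  refine ⟨s, ?_, fun x => ?_⟩
  · have hdisj : Pairwise (Function.onFun Disjoint fun i : s => ball (i : X) (ε / 2)) :=
      fun i j hij => ball_disjoint_ball (by linarith [hmax.1 i.2 j.2 (Subtype.coe_ne_coe.2 hij)])
    have := Measure.countable_meas_pos_of_disjoint_iUnion (μ := μ)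
      (fun i : s => measurableSet_ball) hdisj
    simp only [fun i : s => hμ i _ (half_pos hε), ofPred_true] at this
    exact countable_coe_iff.1 (countable_univ_iff.1 this)
  · by_contra! hfar
    have hins : insert x s ⊆ s := hmax.2 (hmax.1.insert fun y hy _ =>
      ⟨hfar y hy, dist_comm x y ▸ hfar y hy⟩) (subset_insert x s)
    linarith [dist_self x ▸ hfar x (hins (mem_insert x s))]

def IsDoublingWith (μ : Measure X) (C : ℝ) : Prop :=
  ∀ (x : X) (r : ℝ), 0 < r →
    0 < μ (ball x r) ∧ μ (ball x (2 * r)) ≤ ENNReal.ofReal C * μ (ball x r) ∧ μ (ball x r) < ⊤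

namespace IsDoublingWith

variable {μ : Measure X} {C : ℝ}

theorem measure_ball_two_pow_mul_le (hD : IsDoublingWith μ C) (k : ℕ) (x : X) {r : ℝ}
    (hr : 0 < r) : μ (ball x (2 ^ k * r)) ≤ ENNReal.ofReal C ^ k * μ (ball x r) := by
  induction k with
  | zero => simp
  | succ n ih =>
    calc μ (ball x (2 ^ (n + 1) * r)) = μ (ball x (2 * (2 ^ n * r))) := by ring_nf
      _ ≤ ENNReal.ofReal C * μ (ball x (2 ^ n * r)) := (hD x _ (by positivity)).2.1
      _ ≤ ENNReal.ofReal C ^ (n + 1) * μ (ball x r) := by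
        rw [pow_succ', mul_assoc]; gcongr

theorem measure_le_of_subset_ball (hD : IsDoublingWith μ C) {t : Set X} {x : X} {r : ℝ}
    {k : ℕ} (hr : 0 < r) (ht : t ⊆ ball x (2 ^ k * r)) :
    μ t ≤ ENNReal.ofReal C ^ k * μ (ball x r) :=
  (measure_mono ht).trans (hD.measure_ball_two_pow_mul_le k x hr)

theorem sigmaFinite (hD : IsDoublingWith μ C) : SigmaFinite μ := by
  rcases isEmpty_or_nonempty X with hX | ⟨⟨x₀⟩⟩
  · rw [Measure.eq_zero_of_isEmpty μ]; infer_instance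
  · refine Measure.sigmaFinite_of_countable (countable_range fun n : ℕ => ball x₀ (n + 1))
      (forall_mem_range.2 fun n => (hD x₀ _ n.cast_add_one_pos).2.2) ?_
    rw [sUnion_range, iUnion_ball_nat_succ]

theorem exists_mem_ball_le_mul_setLAverage [OpensMeasurableSpace X] (hD : IsDoublingWith μ C)
    {z : X} {r : ℝ} {k : ℕ} {t N : Set X} (hr : 0 < r) (hzt : ball z r ⊆ t)
    (htz : t ⊆ ball z (2 ^ k * r)) (hN : μ N = 0) {G : X → ℝ≥0∞} (hG : Measurable G) :
    ∃ w ∈ ball z r, w ∉ N ∧ G w ≤ ENNReal.ofReal C ^ k * ⨍⁻ p in t, G p ∂μ := by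
  have hB := hD z r hr
  have ht := hD.measure_le_of_subset_ball hr htz
  obtain ⟨w, hwB, hwN, hw⟩ :=
    exists_mem_notMem_le_setLAverage measurableSet_ball hB.1.ne' hB.2.2.ne hN hG.aemeasurable
  refine ⟨w, hwB, hwN, hw.trans (setLAverage_le_mul_setLAverage G hzt hB.1.ne' ?_ ht)⟩
  exact (ht.trans_lt (ENNReal.mul_lt_top (ENNReal.pow_lt_top ENNReal.ofReal_lt_top) hB.2.2)).ne

end IsDoublingWith

def whitneyBallPairs (s : Set X) (β : ℝ) : Set (X × X) :=
  {p | p.2 ∈ ball p.1 (β * infDist p.1 s)}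

noncomputable def whitneyAverage (μ : Measure X) (s : Set X) (β : ℝ) (G : X → ℝ≥0∞) (x : X) :
    ℝ≥0∞ :=
  ⨍⁻ z in ball x (β * infDist x s), G z ∂μ

section Whitney

variable {μ : Measure X} {s : Set X} {β : ℝ}

theorem whitneyAverage_lt_top {G : X → ℝ≥0∞} (hG : ∫⁻ z, G z ∂μ ≠ ∞) (x : X) :
    whitneyAverage μ s β G x < ∞ :=
  laverage_lt_top (ne_top_of_le_ne_top hG (setLIntegral_le_lintegral _ _))

variable [OpensMeasurableSpace X]

theorem whitneyAverage_eq_lintegral {G : X → ℝ≥0∞} (hG : Measurable G) (x : X) :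
    whitneyAverage μ s β G x = ∫⁻ z, (whitneyBallPairs s β).indicator
      (fun p : X × X => G p.2 * (μ (ball p.1 (β * infDist p.1 s)))⁻¹) (x, z) ∂μ := by
  rw [whitneyAverage, setLAverage_eq, div_eq_mul_inv, ← lintegral_mul_const _ hG,
    ← lintegral_indicator measurableSet_ball]
  rfl

/- A point `z` lies in the Whitney ball of `x` only if `x` lies in `B = B(z, 4β dist(z, s))`,
and then the Whitney ball of `x` has measure at least `μ B / C³`. -/
theorem IsDoublingWith.lintegral_inv_measure_whitneyBall_le {C : ℝ} (hD : IsDoublingWith μ C)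
    (hβ : β ≤ 3 / 4) (z : X) :
    ∫⁻ x, (whitneyBallPairs s β).indicator
      (fun p : X × X => (μ (ball p.1 (β * infDist p.1 s)))⁻¹) (x, z) ∂μ ≤
        ENNReal.ofReal C ^ 3 := by
  set B := ball z (4 * β * infDist z s)
  calc _ ≤ ∫⁻ x, B.indicator (fun _ => ENNReal.ofReal C ^ 3 * (μ B)⁻¹) x ∂μ := by
        refine lintegral_mono fun x => ?_
        by_cases hx : (x, z) ∈ whitneyBallPairs s β
        · obtain ⟨hxB, hsub⟩ := mem_ball_infDist_and_subset_of_mem_ball_infDist hβ hx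
          have hB := hD z _ (dist_nonneg.trans_lt hxB)
          rw [indicator_of_mem hx, indicator_of_mem hxB]
          exact ENNReal.inv_le_mul_inv_of_le_mul hB.1.ne' hB.2.2.ne
            (hD.measure_le_of_subset_ball (dist_nonneg.trans_lt hx) hsub)
        · rw [indicator_of_notMem hx]
          exact zero_le
    _ = ENNReal.ofReal C ^ 3 * ((μ B)⁻¹ * μ B) := by
        rw [lintegral_indicator_const measurableSet_ball, mul_assoc]
    _ ≤ ENNReal.ofReal C ^ 3 := mul_le_of_le_one_right' (ENNReal.inv_mul_le_one _)

variable [SecondCountableTopology X]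

theorem measurableSet_whitneyBallPairs : MeasurableSet (whitneyBallPairs s β) :=
  (isOpen_lt (continuous_snd.dist continuous_fst)
    (continuous_const.mul ((continuous_infDist_pt s).comp continuous_fst))).measurableSet

variable [SFinite μ]

theorem measurable_measure_whitneyBall : Measurable fun x => μ (ball x (β * infDist x s)) :=
  measurable_measure_prodMk_left measurableSet_whitneyBallPairs

theorem measurable_whitneyKernel {G : X → ℝ≥0∞} (hG : Measurable G) :
    Measurable ((whitneyBallPairs s β).indicator
      fun p : X × X => G p.2 * (μ (ball p.1 (β * infDist p.1 s)))⁻¹) :=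
  ((hG.comp measurable_snd).mul (measurable_measure_whitneyBall.comp measurable_fst).inv).indicator
    measurableSet_whitneyBallPairs

theorem measurable_whitneyAverage {G : X → ℝ≥0∞} (hG : Measurable G) :
    Measurable (whitneyAverage μ s β G) := by
  simp_rw [funext (whitneyAverage_eq_lintegral (μ := μ) (s := s) (β := β) hG)]
  exact (measurable_whitneyKernel hG).lintegral_prod_right'

theorem IsDoublingWith.lintegral_whitneyAverage_le {C : ℝ} (hD : IsDoublingWith μ C)
    (hβ : β ≤ 3 / 4) {G : X → ℝ≥0∞} (hG : Measurable G) :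
    ∫⁻ x, whitneyAverage μ s β G x ∂μ ≤ ENNReal.ofReal C ^ 3 * ∫⁻ z, G z ∂μ := by
  simp_rw [whitneyAverage_eq_lintegral hG]
  rw [lintegral_lintegral_swap (f := fun x z => (whitneyBallPairs s β).indicator
      (fun p : X × X => G p.2 * (μ (ball p.1 (β * infDist p.1 s)))⁻¹) (x, z))
      (measurable_whitneyKernel hG).aemeasurable, ← lintegral_const_mul' _ _ (by simp)]
  refine lintegral_mono fun z => ?_
  have hk : Measurable fun x => (whitneyBallPairs s β).indicator
      (fun p : X × X => (μ (ball p.1 (β * infDist p.1 s)))⁻¹) (x, z) :=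
    ((measurable_measure_whitneyBall.comp measurable_fst).inv.indicator
      measurableSet_whitneyBallPairs).comp measurable_prodMk_right
  simp_rw [indicator_mul_right]
  rw [lintegral_const_mul _ hk, mul_comm]
  exact mul_le_mul_left (hD.lintegral_inv_measure_whitneyBall_le hβ z) _

theorem IsDoublingWith.integrable_toReal_whitneyAverage {C : ℝ} (hD : IsDoublingWith μ C)
    (hβ : β ≤ 3 / 4) {G : X → ℝ≥0∞} (hG : Measurable G) (hGfin : ∫⁻ z, G z ∂μ ≠ ∞) :
    Integrable (fun x => (whitneyAverage μ s β G x).toReal) μ :=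
  integrable_toReal_of_lintegral_ne_top (measurable_whitneyAverage hG).aemeasurable
    (ne_top_of_le_ne_top (ENNReal.mul_ne_top (by simp) hGfin)
      (hD.lintegral_whitneyAverage_le hβ hG))

theorem IsDoublingWith.integral_toReal_whitneyAverage_le {C : ℝ} (hD : IsDoublingWith μ C)
    (hC : 0 ≤ C) (hβ : β ≤ 3 / 4) {G : X → ℝ≥0∞} (hG : Measurable G)
    (hGfin : ∫⁻ z, G z ∂μ ≠ ∞) :
    ∫ x, (whitneyAverage μ s β G x).toReal ∂μ ≤ C ^ 3 * (∫⁻ z, G z ∂μ).toReal := by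
  rw [integral_toReal (measurable_whitneyAverage hG).aemeasurable
    (ae_of_all _ (whitneyAverage_lt_top hGfin))]
  calc _ ≤ (ENNReal.ofReal C ^ 3 * ∫⁻ z, G z ∂μ).toReal :=
        ENNReal.toReal_mono (ENNReal.mul_ne_top (by simp) hGfin)
          (hD.lintegral_whitneyAverage_le hβ hG)
    _ = _ := by rw [ENNReal.toReal_mul, ENNReal.toReal_pow, ENNReal.toReal_ofReal hC]

end Whitney

section Hajlasz

variable [OpensMeasurableSpace X] {μ : Measure X} {Ω A : Set X} {u g : X → ℝ}

theorem HajlaszAdmissibleLoc.exists_measurable {c : ℝ} (hΩ : IsOpen Ω)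
    (hg : HajlaszAdmissibleLoc μ Ω c u g) :
    ∃ g₀ : X → ℝ, Measurable g₀ ∧ HajlaszAdmissibleLoc μ Ω c u g₀ ∧ Integrable g₀ μ ∧
      ∫ p, g₀ p ∂μ = ∫ p in Ω, g p ∂μ := by
  obtain ⟨hg0, hgi, A, hAΩ, hA, hHaj⟩ := hg
  have hΩm := hΩ.measurableSet
  set g₁ := fun p => max (hgi.1.mk g p) 0
  have hg₁m : Measurable g₁ := hgi.1.stronglyMeasurable_mk.measurable.max measurable_const
  have hgg₁ : g =ᵐ[μ.restrict Ω] g₁ :=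
    hgi.1.ae_eq_mk.mono fun p hp => by simp only [g₁, ← hp, max_eq_left (hg0 p)]
  set E := {p | ¬(p ∈ Ω → g p = g₁ p)}
  have hE : μ E = 0 := ae_iff.1 ((ae_restrict_iff' hΩm).1 hgg₁)
  have hEΩ : E ⊆ Ω := fun p hp => (Classical.not_imp.1 hp).1
  have heq : ∀ p ∈ Ω \ (A ∪ E), Ω.indicator g₁ p = g p := fun p hp => by
    rw [indicator_of_mem hp.1]
    exact (not_not.1 fun h => hp.2 (Or.inr h) : p ∈ Ω → g p = g₁ p) hp.1 |>.symm
  have hint : Integrable (Ω.indicator g₁) μ := (integrable_indicator_iff hΩm).2 (hgi.congr hgg₁)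
  refine ⟨Ω.indicator g₁, hg₁m.indicator hΩm, ⟨fun p => ?_, hint.integrableOn, A ∪ E,
    union_subset hAΩ hEΩ, measure_union_null hA hE, fun x hx y hy hxy => ?_⟩, hint, ?_⟩
  · by_cases hp : p ∈ Ω <;> simp [hp, g₁]
  · rw [heq x hx, heq y hy]
    exact hHaj x ⟨hx.1, fun h => hx.2 (Or.inl h)⟩ y ⟨hy.1, fun h => hy.2 (Or.inl h)⟩ hxy
  · rw [integral_indicator hΩm]
    exact integral_congr_ae hgg₁.symm

/- `K` is the doubling loss between the small balls along a chain and the Whitney balls of its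
endpoints; the factor `4` is what summing the Hajłasz inequality along a chain costs. -/
noncomputable def whitneyGradient (μ : Measure X) (Ω : Set X) (β K : ℝ) (g : X → ℝ) (p : X) :
    ℝ :=
  4 * g p + 4 * K * (whitneyAverage μ Ωᶜ β (fun z => ENNReal.ofReal (g z)) p).toReal

theorem IsDoublingWith.exists_mem_ball_le_whitneyAverage {C : ℝ} (hD : IsDoublingWith μ C)
    (hC : 0 ≤ C) (hgm : Measurable g) (hgi : Integrable g μ) (hA : μ A = 0)
    {ca cb m d : ℝ} {N k : ℕ} {P z : X} (hcb : 0 ≤ cb) (hcb1 : cb ≤ 1) (hN : 2 ≤ N)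
    (hk : 4 * N ≤ 2 ^ k * ca) (hd : 0 < d) (hfar : ca * m < d) (hnear : d ≤ cb * m)
    (hPm : m ≤ infDist P Ωᶜ) (hPd : infDist P Ωᶜ ≤ m + d) (hzP : dist z P ≤ d / 2) :
    ∃ w ∈ ball z (d / (2 * N)), w ∉ A ∧ g w ≤
      C ^ k * (whitneyAverage μ Ωᶜ (3 / 4 * cb) (fun p => ENNReal.ofReal (g p)) P).toReal := by
  have hN' : (2 : ℝ) ≤ N := by exact_mod_cast hN
  have hr : 0 < d / (2 * N) := by positivity
  have hm : 0 < m := by nlinarith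
  have hr4 : 4 * (d / (2 * N)) ≤ d := by
    rw [mul_div_assoc', div_le_iff₀ (by positivity)]; nlinarith
  have hkr : 2 * m ≤ 2 ^ k * (d / (2 * N)) := by
    rw [mul_div_assoc', le_div_iff₀ (by positivity)]
    nlinarith [mul_le_mul_of_nonneg_right hk hm.le, pow_pos (two_pos (α := ℝ)) k]
  have hδ : cb * infDist P Ωᶜ ≤ infDist P Ωᶜ := mul_le_of_le_one_left infDist_nonneg hcb1
  have hdm : d ≤ m := hnear.trans (mul_le_of_le_one_left hm.le hcb1)
  have hcbm : cb * m ≤ cb * infDist P Ωᶜ := mul_le_mul_of_nonneg_left hPm hcb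
  obtain ⟨w, hw, hwA, hGw⟩ := hD.exists_mem_ball_le_mul_setLAverage (z := z) (k := k)
    (t := ball P (3 / 4 * cb * infDist P Ωᶜ)) hr (ball_subset_ball' (by linarith))
    (ball_subset_ball' (by rw [dist_comm]; linarith)) hA hgm.ennreal_ofReal
  have hH := whitneyAverage_lt_top (μ := μ) (s := Ωᶜ) (β := 3 / 4 * cb)
    hgi.lintegral_lt_top.ne P
  change _ ≤ _ * whitneyAverage μ Ωᶜ (3 / 4 * cb) _ P at hGw
  rw [ENNReal.ofReal_le_iff_le_toReal (ENNReal.mul_ne_top (by simp) hH.ne), ENNReal.toReal_mul,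
    ENNReal.toReal_pow, ENNReal.toReal_ofReal hC] at hGw
  exact ⟨w, hw, hwA, hGw⟩

theorem IsDoublingWith.exists_whitneyChain {C : ℝ} (hD : IsDoublingWith μ C) (hC : 0 ≤ C)
    (hg0 : ∀ p, 0 ≤ g p) (hgm : Measurable g) (hgi : Integrable g μ) (hA : μ A = 0)
    {ca cb : ℝ} {N k : ℕ} {x y : X} {z : ℕ → X} (hca : 0 < ca) (hcb : 0 ≤ cb) (hcb1 : cb ≤ 1)
    (hN : 2 ≤ N) (hk : 4 * N ≤ 2 ^ k * ca) (hx : x ∉ A) (hy : y ∉ A)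
    (hfar : ca * min (infDist x Ωᶜ) (infDist y Ωᶜ) < dist x y)
    (hnear : dist x y ≤ cb * min (infDist x Ωᶜ) (infDist y Ωᶜ)) (hz0 : z 0 = x) (hzN : z N = y)
    (hz : ∀ i ≤ N, ∃ P ∈ ({x, y} : Set X), dist (z i) P ≤ dist x y / 2) :
    ∃ W : ℕ → X, W 0 = x ∧ W N = y ∧ ∀ i ≤ N, dist (W i) (z i) < dist x y / (2 * N) ∧ W i ∉ A ∧
      (1 - cb) * min (infDist x Ωᶜ) (infDist y Ωᶜ) ≤ infDist (W i) Ωᶜ ∧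
      g (W i) ≤ g x + g y + C ^ k *
        ((whitneyAverage μ Ωᶜ (3 / 4 * cb) (fun p => ENNReal.ofReal (g p)) x).toReal +
          (whitneyAverage μ Ωᶜ (3 / 4 * cb) (fun p => ENNReal.ofReal (g p)) y).toReal) := by
  set d := dist x y
  set m := min (infDist x Ωᶜ) (infDist y Ωᶜ)
  set H := fun p => (whitneyAverage μ Ωᶜ (3 / 4 * cb) (fun p => ENNReal.ofReal (g p)) p).toReal
  set K := g x + g y + C ^ k * (H x + H y)
  have hN' : (2 : ℝ) ≤ N := by exact_mod_cast hN
  have hd : 0 < d := (mul_nonneg hca.le (le_min infDist_nonneg infDist_nonneg)).trans_lt hfar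
  have hK : ∀ P ∈ ({x, y} : Set X), g P + C ^ k * H P ≤ K := by
    have : 0 ≤ C ^ k * H x ∧ 0 ≤ C ^ k * H y := ⟨by positivity, by positivity⟩
    rintro P (hP | hP) <;> rw [hP] <;> linarith [hg0 x, hg0 y]
  have hends := fun P (hP : P ∈ ({x, y} : Set X)) => infDist_mem_Icc_of_mem_pair Ωᶜ hP
  -- the two implications make `choose` return a chain from `x` to `y`
  have hgood : ∀ i, ∃ w, i ≤ N → dist w (z i) < d / (2 * N) ∧ w ∉ A ∧ g w ≤ K ∧
      (i = 0 → w = x) ∧ (i = N → w = y) := by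
    intro i
    by_cases hi0 : i = 0
    · refine ⟨x, fun _ => ⟨by simp [hi0, hz0]; positivity, hx, ?_, fun _ => rfl, by omega⟩⟩
      linarith [hK x (by simp), mul_nonneg (pow_nonneg hC k) (ENNReal.toReal_nonneg : 0 ≤ H x)]
    by_cases hiN : i = N
    · refine ⟨y, fun _ => ⟨by simp [hiN, hzN]; positivity, hy, ?_, by omega, fun _ => rfl⟩⟩
      linarith [hK y (by simp), mul_nonneg (pow_nonneg hC k) (ENNReal.toReal_nonneg : 0 ≤ H y)]
    by_cases hi : i ≤ N
    · obtain ⟨P, hP, hzP⟩ := hz i hi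
      obtain ⟨w, hw, hwA, hgw⟩ := hD.exists_mem_ball_le_whitneyAverage hC hgm hgi hA hcb hcb1
        hN hk hd hfar hnear (hends P hP).1 (hends P hP).2 hzP
      exact ⟨w, fun _ => ⟨hw, hwA, by linarith [hK P hP, hg0 P], by omega, by omega⟩⟩
    · exact ⟨x, fun h => absurd h hi⟩
  choose W hW using hgood
  refine ⟨W, (hW 0 N.zero_le).2.2.2.1 rfl, (hW N le_rfl).2.2.2.2 rfl,
    fun i hi => ⟨(hW i hi).1, (hW i hi).2.1, ?_, (hW i hi).2.2.1⟩⟩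
  obtain ⟨P, hP, hzP⟩ := hz i hi
  have hr : 4 * (d / (2 * N)) ≤ d := by
    rw [mul_div_assoc', div_le_iff₀ (by positivity)]; nlinarith
  have hPW : infDist P Ωᶜ ≤ infDist (W i) Ωᶜ + dist P (W i) := infDist_le_infDist_add_dist
  have := dist_triangle P (z i) (W i)
  rw [dist_comm P (z i), dist_comm (z i) (W i)] at this
  nlinarith [(hends P hP).1, (hW i hi).1]

theorem IsDoublingWith.abs_sub_le_whitneyGradient {C : ℝ} (hD : IsDoublingWith μ C)
    (hC : 0 ≤ C) (hg0 : ∀ p, 0 ≤ g p) (hgm : Measurable g) (hgi : Integrable g μ)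
    (hA : μ A = 0) {ca cb : ℝ} {N k : ℕ} {x y : X} {γ : ℝ → X} (hca : 0 < ca) (hcb : 0 ≤ cb)
    (hcb1 : cb < 1) (hN2 : 2 ≤ N) (hN : 2 ≤ N * (ca * (1 - cb))) (hk : 4 * N ≤ 2 ^ k * ca)
    (hHaj : ∀ x ∈ Ω \ A, ∀ y ∈ Ω \ A, dist x y ≤ ca * min (infDist x Ωᶜ) (infDist y Ωᶜ) →
      |u x - u y| ≤ dist x y * (g x + g y))
    (hγ0 : γ 0 = x) (hγ1 : γ (dist x y) = y) (hγ : LipschitzOnWith 1 γ (Icc 0 (dist x y)))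
    (hx : x ∈ Ω \ A) (hy : y ∈ Ω \ A)
    (hfar : ca * min (infDist x Ωᶜ) (infDist y Ωᶜ) < dist x y)
    (hnear : dist x y ≤ cb * min (infDist x Ωᶜ) (infDist y Ωᶜ)) :
    |u x - u y| ≤ dist x y * (whitneyGradient μ Ω (3 / 4 * cb) (C ^ k) g x +
      whitneyGradient μ Ω (3 / 4 * cb) (C ^ k) g y) := by
  obtain ⟨z, hz0, hzN, hzz, hz⟩ := exists_chain_of_lipschitzOnWith (N := N) hγ0 hγ1 hγ (by omega)
  obtain ⟨W, hW0, hWN, hW⟩ := hD.exists_whitneyChain hC hg0 hgm hgi hA hca hcb hcb1.le hN2 hk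
    hx.2 hy.2 hfar hnear hz0 hzN hz
  set d := dist x y
  set m := min (infDist x Ωᶜ) (infDist y Ωᶜ)
  set K := g x + g y + C ^ k *
    ((whitneyAverage μ Ωᶜ (3 / 4 * cb) (fun p => ENNReal.ofReal (g p)) x).toReal +
      (whitneyAverage μ Ωᶜ (3 / 4 * cb) (fun p => ENNReal.ofReal (g p)) y).toReal)
  have hN' : (2 : ℝ) ≤ N := by exact_mod_cast hN2
  have hd : 0 < d := (mul_nonneg hca.le (le_min infDist_nonneg infDist_nonneg)).trans_lt hfar
  have hdm : d ≤ m := hnear.trans (mul_le_of_le_one_left (by nlinarith) hcb1.le)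
  have hWΩ : ∀ i ≤ N, W i ∈ Ω \ A := fun i hi => by
    refine ⟨not_not.1 fun h => ?_, (hW i hi).2.1⟩
    nlinarith [(hW i hi).2.2.1, infDist_zero_of_mem (show W i ∈ Ωᶜ from h)]
  have hlink : ∀ i < N, |u (W i) - u (W (i + 1))| ≤ 2 * d / N * (2 * K) := by
    intro i hi
    have hdist : dist (W i) (W (i + 1)) ≤ 2 * d / N := by
      have h2r : d / (2 * N) + d / N + d / (2 * N) = 2 * d / N := by field_simp; ring
      have hW' := (hW (i + 1) hi).1
      rw [dist_comm] at hW'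
      linarith [dist_triangle4 (W i) (z i) (z (i + 1)) (W (i + 1)), (hW i hi.le).1, hzz i hi]
    have hclose : 2 * d / N ≤ ca * min (infDist (W i) Ωᶜ) (infDist (W (i + 1)) Ωᶜ) := by
      refine le_trans ?_ (mul_le_mul_of_nonneg_left (le_min (hW i hi.le).2.2.1
        (hW (i + 1) hi).2.2.1) hca.le)
      rw [div_le_iff₀ (by positivity)]
      nlinarith [mul_le_mul_of_nonneg_left hdm (by nlinarith : 0 ≤ ca * (1 - cb))]
    calc |u (W i) - u (W (i + 1))| ≤ dist (W i) (W (i + 1)) * (g (W i) + g (W (i + 1))) :=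
          hHaj _ (hWΩ i hi.le) _ (hWΩ (i + 1) hi) (hdist.trans hclose)
      _ ≤ 2 * d / N * (2 * K) := by
          gcongr
          · linarith [hg0 (W i), hg0 (W (i + 1))]
          · linarith [(hW i hi.le).2.2.2, (hW (i + 1) hi).2.2.2]
  have htel := dist_le_range_sum_of_dist_le (f := fun i => u (W i)) N fun hi => hlink _ hi
  simp only [Real.dist_eq, Finset.sum_const, Finset.card_range, nsmul_eq_mul, hW0, hWN] at htel
  calc |u x - u y| ≤ N * (2 * d / N * (2 * K)) := htel
    _ = d * (whitneyGradient μ Ω (3 / 4 * cb) (C ^ k) g x +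
          whitneyGradient μ Ω (3 / 4 * cb) (C ^ k) g y) := by
        simp only [whitneyGradient, K]; field_simp; ring

theorem IsDoublingWith.hajlaszAdmissibleLoc_whitneyGradient [SecondCountableTopology X]
    [SFinite μ] {C : ℝ} (hD : IsDoublingWith μ C) (hC : 0 ≤ C)
    (hgeo : IsGeodesicSpace X)
    {ca cb : ℝ} {N k : ℕ} (hca : 0 < ca) (hcb : 0 ≤ cb) (hcb1 : cb < 1) (hN2 : 2 ≤ N)
    (hN : 2 ≤ N * (ca * (1 - cb))) (hk : 4 * N ≤ 2 ^ k * ca)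
    (hg : HajlaszAdmissibleLoc μ Ω ca u g) (hgm : Measurable g) (hgi : Integrable g μ) :
    HajlaszAdmissibleLoc μ Ω cb u (whitneyGradient μ Ω (3 / 4 * cb) (C ^ k) g) := by
  obtain ⟨hg0, -, A, hAΩ, hA, hHaj⟩ := hg
  have hH := hD.integrable_toReal_whitneyAverage (s := Ωᶜ) (β := 3 / 4 * cb) (by linarith)
    hgm.ennreal_ofReal hgi.lintegral_lt_top.ne
  have hle : ∀ p, g p ≤ whitneyGradient μ Ω (3 / 4 * cb) (C ^ k) g p := fun p => by
    have : 0 ≤ 4 * C ^ k *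
        (whitneyAverage μ Ωᶜ (3 / 4 * cb) (fun z => ENNReal.ofReal (g z)) p).toReal := by
      positivity
    simp only [whitneyGradient]; linarith [hg0 p]
  refine ⟨fun p => (hg0 p).trans (hle p), ((hgi.const_mul 4).add (hH.const_mul _)).integrableOn,
    A, hAΩ, hA, fun x hx y hy hxy => ?_⟩
  rcases le_or_gt (dist x y) (ca * min (infDist x Ωᶜ) (infDist y Ωᶜ)) with hclose | hfar
  · calc |u x - u y| ≤ dist x y * (g x + g y) := hHaj x hx y hy hclose
      _ ≤ _ := by gcongr <;> exact hle _
  · obtain ⟨γ, hγ0, hγ1, hγ⟩ := hgeo x y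
    exact hD.abs_sub_le_whitneyGradient hC hg0 hgm hgi hA hca hcb hcb1 hN2 hN hk hHaj hγ0 hγ1 hγ
      hx hy hfar hxy

theorem IsDoublingWith.integral_whitneyGradient_le [SecondCountableTopology X] [SFinite μ]
    {C cb : ℝ} {k : ℕ} (hD : IsDoublingWith μ C) (hC : 0 ≤ C) (hcb : cb ≤ 1) (hg0 : ∀ p, 0 ≤ g p)
    (hgm : Measurable g) (hgi : Integrable g μ) :
    ∫ p in Ω, whitneyGradient μ Ω (3 / 4 * cb) (C ^ k) g p ∂μ ≤
      (4 + 4 * C ^ (k + 3)) * ∫ p, g p ∂μ := by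
  have hH := hD.integrable_toReal_whitneyAverage (s := Ωᶜ) (β := 3 / 4 * cb) (by linarith)
    hgm.ennreal_ofReal hgi.lintegral_lt_top.ne
  have hg : ∫ p in Ω, g p ∂μ ≤ ∫ p, g p ∂μ := setIntegral_le_integral hgi (ae_of_all _ hg0)
  have hHΩ := setIntegral_le_integral (s := Ω) hH (ae_of_all _ fun _ => ENNReal.toReal_nonneg)
  have hHg := hD.integral_toReal_whitneyAverage_le (s := Ωᶜ) hC (by linarith : 3 / 4 * cb ≤ 3 / 4)
    hgm.ennreal_ofReal hgi.lintegral_lt_top.ne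
  rw [← integral_eq_lintegral_of_nonneg_ae (ae_of_all _ hg0) hgi.1] at hHg
  simp only [whitneyGradient]
  rw [integral_add (hgi.const_mul 4).integrableOn (hH.const_mul _).integrableOn,
    integral_const_mul, integral_const_mul, pow_add]
  have hCk : 0 ≤ 4 * C ^ k := by positivity
  nlinarith [mul_le_mul_of_nonneg_left (hHΩ.trans hHg) hCk]

theorem IsDoublingWith.exists_hajlaszAdmissibleLoc_le {C : ℝ} (hD : IsDoublingWith μ C)
    (hC : 0 ≤ C) (hgeo : IsGeodesicSpace X)
    (hΩ : IsOpen Ω) {ca cb : ℝ} {N k : ℕ} (hca : 0 < ca) (hcb : 0 ≤ cb) (hcb1 : cb < 1)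
    (hN2 : 2 ≤ N) (hN : 2 ≤ N * (ca * (1 - cb))) (hk : 4 * N ≤ 2 ^ k * ca)
    (hg : HajlaszAdmissibleLoc μ Ω ca u g) :
    ∃ g' : X → ℝ, HajlaszAdmissibleLoc μ Ω cb u g' ∧
      ∫ p in Ω, |u p| ∂μ + ∫ p in Ω, g' p ∂μ ≤
        (4 + 4 * C ^ (k + 3)) * (∫ p in Ω, |u p| ∂μ + ∫ p in Ω, g p ∂μ) := by
  have := hD.sigmaFinite
  have := secondCountableTopology_of_measure_ball_pos μ fun x r hr => (hD x r hr).1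
  obtain ⟨g₀, hg₀m, hg₀, hg₀i, hg₀g⟩ := hg.exists_measurable hΩ
  refine ⟨_, hD.hajlaszAdmissibleLoc_whitneyGradient hC hgeo hca hcb hcb1 hN2 hN hk hg₀ hg₀m hg₀i,
    ?_⟩
  have hg' := hD.integral_whitneyGradient_le (Ω := Ω) (k := k) hC hcb1.le hg₀.1 hg₀m hg₀i
  have hu : 0 ≤ ∫ p in Ω, |u p| ∂μ := integral_nonneg fun _ => abs_nonneg _
  have hC1 : 0 ≤ 4 * C ^ (k + 3) := by positivity
  rw [hg₀g] at hg'
  nlinarith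

end Hajlasz

/-- If `X` is a complete geodesic metric space (every pair of points
is joined by a curve of length equal to their distance) with a doubling measure of
constant `C_d`, and `Ω ⊆ X` is a nonempty open set with nonempty complement, then for
any `0 < c₁, c₂ < 1` one has `M^{1,1}_{c₁}(Ω) = M^{1,1}_{c₂}(Ω)` with equivalent norms,
the equivalence constants depending only on `C_d, c₁, c₂`. -/
theorem hajlaszLoc_indep_of_constant (C_d c₁ c₂ : ℝ) (hCd : 1 ≤ C_d)
    (hc₁ : c₁ ∈ Set.Ioo (0 : ℝ) 1) (hc₂ : c₂ ∈ Set.Ioo (0 : ℝ) 1) :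
    ∃ C ≥ (1 : ℝ), ∀ (X : Type) [MetricSpace X] [CompleteSpace X] [MeasurableSpace X]
      [BorelSpace X] (μ : Measure X),
      (∀ (x : X) (r : ℝ), 0 < r →
        0 < μ (ball x r) ∧ μ (ball x (2 * r)) ≤ ENNReal.ofReal C_d * μ (ball x r) ∧
          μ (ball x r) < ⊤) →
      (∀ x y : X, ∃ γ : ℝ → X, γ 0 = x ∧ γ (dist x y) = y ∧
        LipschitzOnWith 1 γ (Set.Icc (0 : ℝ) (dist x y))) →
      ∀ (Ω : Set X), IsOpen Ω → Ω.Nonempty → Ωᶜ.Nonempty →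
      ∀ u : X → ℝ, IntegrableOn u Ω μ →
        ((∀ g : X → ℝ, HajlaszAdmissibleLoc μ Ω c₁ u g →
          ∃ g' : X → ℝ, HajlaszAdmissibleLoc μ Ω c₂ u g' ∧
            ∫ p in Ω, |u p| ∂μ + ∫ p in Ω, g' p ∂μ ≤
              C * (∫ p in Ω, |u p| ∂μ + ∫ p in Ω, g p ∂μ)) ∧
        (∀ g : X → ℝ, HajlaszAdmissibleLoc μ Ω c₂ u g →
          ∃ g' : X → ℝ, HajlaszAdmissibleLoc μ Ω c₁ u g' ∧
            ∫ p in Ω, |u p| ∂μ + ∫ p in Ω, g' p ∂μ ≤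
              C * (∫ p in Ω, |u p| ∂μ + ∫ p in Ω, g p ∂μ))) := by
  obtain ⟨hc₁0, hc₁1⟩ := hc₁
  obtain ⟨hc₂0, hc₂1⟩ := hc₂
  have hlarge : ∀ a : ℝ, 0 < a → ∀ᶠ n : ℕ in Filter.atTop, 2 ≤ (n : ℝ) * a := fun a ha =>
    (tendsto_natCast_atTop_atTop.atTop_mul_const ha).eventually_ge_atTop 2
  obtain ⟨N, hN2, hN₁, hN₂⟩ := ((Filter.eventually_ge_atTop 2).and
    ((hlarge (c₁ * (1 - c₂)) (by nlinarith)).and (hlarge (c₂ * (1 - c₁)) (by nlinarith)))).exists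
  have hpow : ∀ a : ℝ, 0 < a → ∀ᶠ k : ℕ in Filter.atTop, 4 * (N : ℝ) ≤ 2 ^ k * a := fun a ha =>
    ((tendsto_pow_atTop_atTop_of_one_lt one_lt_two).atTop_mul_const ha).eventually_ge_atTop _
  obtain ⟨k, hk₁, hk₂⟩ := ((hpow c₁ hc₁0).and (hpow c₂ hc₂0)).exists
  have hC : 0 ≤ C_d := by linarith
  refine ⟨4 + 4 * C_d ^ (k + 3), by nlinarith [pow_nonneg hC (k + 3)],
    fun X _ _ _ _ μ hD hgeo Ω hΩ _ _ u _ => ⟨fun g hg => ?_, fun g hg => ?_⟩⟩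
  · exact IsDoublingWith.exists_hajlaszAdmissibleLoc_le hD hC hgeo hΩ hc₁0 hc₂0.le hc₂1 hN2 hN₁
      hk₁ hg
  · exact IsDoublingWith.exists_hajlaszAdmissibleLoc_le hD hC hgeo hΩ hc₂0 hc₁0.le hc₁1 hN2 hN₂
      hk₂ hg
end

section
/- Let λ > 0 and on ℝ² define the weight w_λ(x₁,x₂) := (log(max{e, e/|x₂|}))^λ and the measure dμ := w_λ dm₂, where m₂ is 2-dimensional Lebesgue measure. Then there exist constants 0 < c ≤ C, depending only on λ, such that for every point x ∈ ℝ×{0} and every 0 < r < e^{−2λ}, the open axis-parallel square Q(x,r) with center x and side length r satisfies c·r²·(log(e/r))^λ ≤ μ(Q(x,r)) ≤ C·r²·(log(e/r))^λ. -/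
/-!
The density depends only on `x₂`, so `μ(Q) = r · ∫_{-r/2}^{r/2} log(e/|t|)^λ dt`, and on this
interval `log(e/|t|) ≥ log(e/r)`, which gives the lower bound with `c = 1`. For the upper bound
write `log(e/|t|) = L + s` with `L = log(e/r) ≥ 1` and `s = log(r/|t|) ≥ 0`. Then
`(L + s)^λ ≤ L^λ (1 + s)^λ ≤ max(1, 2λ)^λ L^λ e^{s/2} = max(1, 2λ)^λ L^λ (r/|t|)^{1/2}`,
and `∫_{-r/2}^{r/2} |t|^{-1/2} dt ≤ 4 r^{1/2}`, so `C = 4 max(1, 2λ)^λ` works.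
-/

open MeasureTheory

/-- The weight `w_λ(x₁,x₂) = (log(max{e, e/|x₂|}))^λ` on `ℝ²`. -/
noncomputable def wlam (lam : ℝ) (x : ℝ × ℝ) : ℝ :=
  Real.log (max (Real.exp 1) (Real.exp 1 / |x.2|)) ^ lam

/-- The weighted measure `dμ = w_λ dm₂` on `ℝ²`. -/
noncomputable def muW (lam : ℝ) : Measure (ℝ × ℝ) :=
  (volume : Measure (ℝ × ℝ)).withDensity fun x => ENNReal.ofReal (wlam lam x)

open Set Real

lemma one_add_rpow_le_mul_exp_half {lam s : ℝ} (hlam : 0 < lam) (hs : 0 ≤ s) :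
    (1 + s) ^ lam ≤ max 1 (2 * lam) ^ lam * exp (s / 2) := by
  have hlin : 1 + s ≤ max 1 (2 * lam) * exp (s / (2 * lam)) :=
    calc 1 + s ≤ max 1 (2 * lam) * (1 + s / (2 * lam)) := by
          rw [mul_add, mul_one, mul_div_assoc']
          gcongr
          · exact le_max_left _ _
          · rw [le_div_iff₀ (by positivity)]
            nlinarith [le_max_right 1 (2 * lam)]
      _ ≤ max 1 (2 * lam) * exp (s / (2 * lam)) := by
          gcongr
          linarith [add_one_le_exp (s / (2 * lam))]
  calc (1 + s) ^ lam ≤ (max 1 (2 * lam) * exp (s / (2 * lam))) ^ lam := by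
        gcongr
    _ = max 1 (2 * lam) ^ lam * exp (s / 2) := by
        rw [mul_rpow (by positivity) (exp_pos _).le, ← exp_mul]
        field_simp

lemma one_le_log_exp_div {r : ℝ} (hr0 : 0 < r) (hr : r ≤ 1) : 1 ≤ log (exp 1 / r) := by
  rw [log_div (exp_pos 1).ne' hr0.ne', log_exp]
  linarith [log_nonpos hr0.le hr]

lemma log_exp_div_rpow_le {lam x r : ℝ} (hlam : 0 < lam) (hx : 0 < x) (hxr : x ≤ r) (hr : r ≤ 1) :
    log (exp 1 / x) ^ lam ≤
      max 1 (2 * lam) ^ lam * log (exp 1 / r) ^ lam * (r / x) ^ (1 / 2 : ℝ) := by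
  have hr0 : 0 < r := hx.trans_le hxr
  set L := log (exp 1 / r)
  set s := log (r / x)
  have hL : 1 ≤ L := one_le_log_exp_div hr0 hr
  have hs : 0 ≤ s := log_nonneg ((one_le_div hx).2 hxr)
  have hsplit : log (exp 1 / x) = L + s := by
    rw [← log_mul (div_pos (exp_pos 1) hr0).ne' (div_pos hr0 hx).ne']
    field_simp
  calc log (exp 1 / x) ^ lam ≤ (L * (1 + s)) ^ lam := by
        rw [hsplit]
        gcongr
        nlinarith
    _ = L ^ lam * (1 + s) ^ lam := mul_rpow (by linarith) (by linarith)
    _ ≤ L ^ lam * (max 1 (2 * lam) ^ lam * exp (s / 2)) := by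
        gcongr
        exact one_add_rpow_le_mul_exp_half hlam hs
    _ = max 1 (2 * lam) ^ lam * L ^ lam * (r / x) ^ (1 / 2 : ℝ) := by
        rw [rpow_def_of_pos (div_pos hr0 hx), div_eq_mul_one_div s 2]
        ring

lemma setLIntegral_Ioo_comp_abs_le (f : ℝ → ENNReal) (a : ℝ) :
    ∫⁻ t in Ioo (-a) a, f |t| ≤ 2 * ∫⁻ t in Icc 0 a, f t := by
  have habs : ∫⁻ t in Icc 0 a, f |t| = ∫⁻ t in Icc 0 a, f t :=
    setLIntegral_congr_fun measurableSet_Icc fun t ht => by rw [abs_of_nonneg ht.1]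
  have hneg : ∫⁻ t in Icc (-a) 0, f |t| = ∫⁻ t in Icc 0 a, f t := by
    have := (Measure.measurePreserving_neg (volume : Measure ℝ)).setLIntegral_comp_preimage_emb
      measurableEmbedding_neg (fun t => f |t|) (Icc 0 a)
    simp only [neg_preimage, neg_Icc, neg_zero, abs_neg] at this
    rw [this, habs]
  calc ∫⁻ t in Ioo (-a) a, f |t|
      ≤ ∫⁻ t in Icc (-a) 0 ∪ Icc 0 a, f |t| :=
        lintegral_mono_set fun t ht => by
          rcases le_total t 0 with h | h
          exacts [Or.inl ⟨ht.1.le, h⟩, Or.inr ⟨h, ht.2.le⟩]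
    _ ≤ _ := lintegral_union_le _ _ _
    _ = 2 * ∫⁻ t in Icc 0 a, f t := by rw [hneg, habs, two_mul]

lemma setLIntegral_Icc_rpow_neg_half {a : ℝ} (ha : 0 ≤ a) :
    ∫⁻ t in Icc 0 a, ENNReal.ofReal (t ^ (-(1 / 2) : ℝ)) =
      ENNReal.ofReal (2 * a ^ (1 / 2 : ℝ)) := by
  have hint : IntegrableOn (fun t : ℝ => t ^ (-(1 / 2) : ℝ)) (Icc 0 a) := by
    rw [integrableOn_Icc_iff_integrableOn_Ioc, ← intervalIntegrable_iff_integrableOn_Ioc_of_le ha]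
    exact intervalIntegral.intervalIntegrable_rpow' (by norm_num)
  rw [← ofReal_integral_eq_lintegral_ofReal hint
    ((ae_restrict_iff' measurableSet_Icc).2 (Filter.Eventually.of_forall fun t ht =>
      rpow_nonneg ht.1 _)), integral_Icc_eq_integral_Ioc,
    ← intervalIntegral.integral_of_le ha, integral_rpow (Or.inl (by norm_num)),
    zero_rpow (by norm_num)]
  norm_num [div_eq_mul_inv, mul_comm]

-- Since `exp 1 / |0| = 0`, `logWeight lam 0 = 1`; the null set `{0}` is discarded in the bounds.
noncomputable def logWeight (lam t : ℝ) : ℝ :=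
  log (max (exp 1) (exp 1 / |t|)) ^ lam

lemma measurable_logWeight (lam : ℝ) : Measurable (logWeight lam) := by
  unfold logWeight; fun_prop

lemma logWeight_of_abs_le_one {lam t : ℝ} (ht : t ≠ 0) (ht1 : |t| ≤ 1) :
    logWeight lam t = log (exp 1 / |t|) ^ lam := by
  rw [logWeight, max_eq_right (le_div_self (exp_pos 1).le (abs_pos.2 ht) ht1)]

lemma log_exp_div_rpow_le_logWeight {lam r t : ℝ} (hlam : 0 ≤ lam) (ht : t ≠ 0) (htr : |t| ≤ r)
    (hr : r ≤ exp 1) : log (exp 1 / r) ^ lam ≤ logWeight lam t := by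
  have ht0 := abs_pos.2 ht
  have hr0 := ht0.trans_le htr
  refine rpow_le_rpow (log_nonneg ((one_le_div hr0).2 hr)) ?_ hlam
  exact log_le_log (by positivity) ((div_le_div_of_nonneg_left (exp_pos 1).le ht0 htr).trans
    (le_max_right _ _))

lemma logWeight_le {lam r t : ℝ} (hlam : 0 < lam) (ht : t ≠ 0) (htr : |t| ≤ r) (hr : r ≤ 1) :
    logWeight lam t ≤
      max 1 (2 * lam) ^ lam * log (exp 1 / r) ^ lam * r ^ (1 / 2 : ℝ) * |t| ^ (-(1 / 2) : ℝ) := by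
  have hr0 : 0 < r := (abs_pos.2 ht).trans_le htr
  rw [logWeight_of_abs_le_one ht (htr.trans hr), mul_assoc _ (r ^ _), rpow_neg (abs_nonneg t),
    ← div_eq_mul_inv, ← div_rpow hr0.le (abs_nonneg t)]
  exact log_exp_div_rpow_le hlam (abs_pos.2 ht) htr hr

lemma ofReal_le_setLIntegral_logWeight {lam r : ℝ} (hlam : 0 ≤ lam) (hr0 : 0 < r)
    (hr : r ≤ exp 1) :
    ENNReal.ofReal (r * log (exp 1 / r) ^ lam) ≤
      ∫⁻ t in Ioo (-(r / 2)) (r / 2), ENNReal.ofReal (logWeight lam t) := by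
  calc ENNReal.ofReal (r * log (exp 1 / r) ^ lam)
      = ∫⁻ _ in Ioo (-(r / 2)) (r / 2), ENNReal.ofReal (log (exp 1 / r) ^ lam) := by
        rw [setLIntegral_const, Real.volume_Ioo, ← ENNReal.ofReal_mul' (by linarith)]
        ring_nf
    _ ≤ _ := by
        refine setLIntegral_mono_ae (measurable_logWeight lam).ennreal_ofReal.aemeasurable ?_
        filter_upwards [compl_mem_ae_iff.2 (measure_singleton (0 : ℝ))] with t ht0 ht
        exact ENNReal.ofReal_le_ofReal (log_exp_div_rpow_le_logWeight hlam ht0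
          ((abs_lt.2 ht).le.trans (by linarith)) hr)

lemma setLIntegral_logWeight_le {lam r : ℝ} (hlam : 0 < lam) (hr0 : 0 < r) (hr : r ≤ 1) :
    ∫⁻ t in Ioo (-(r / 2)) (r / 2), ENNReal.ofReal (logWeight lam t) ≤
      ENNReal.ofReal (4 * max 1 (2 * lam) ^ lam * (r * log (exp 1 / r) ^ lam)) := by
  set K := max 1 (2 * lam) ^ lam
  set L := log (exp 1 / r)
  have hK : 0 ≤ K := by positivity
  have hL : 0 ≤ L := zero_le_one.trans (one_le_log_exp_div hr0 hr)
  set c := K * L ^ lam * r ^ (1 / 2 : ℝ)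
  have hc : 0 ≤ c := by positivity
  calc ∫⁻ t in Ioo (-(r / 2)) (r / 2), ENNReal.ofReal (logWeight lam t)
      ≤ ∫⁻ t in Ioo (-(r / 2)) (r / 2),
          ENNReal.ofReal c * ENNReal.ofReal (|t| ^ (-(1 / 2) : ℝ)) := by
        refine setLIntegral_mono_ae (by fun_prop) ?_
        filter_upwards [compl_mem_ae_iff.2 (measure_singleton (0 : ℝ))] with t ht0 ht
        rw [← ENNReal.ofReal_mul hc]
        exact ENNReal.ofReal_le_ofReal (logWeight_le hlam ht0
          ((abs_lt.2 ht).le.trans (by linarith)) hr)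
    _ = ENNReal.ofReal c *
          ∫⁻ t in Ioo (-(r / 2)) (r / 2), ENNReal.ofReal (|t| ^ (-(1 / 2) : ℝ)) :=
        lintegral_const_mul' _ _ ENNReal.ofReal_ne_top
    _ ≤ ENNReal.ofReal c * (2 * ENNReal.ofReal (2 * (r / 2) ^ (1 / 2 : ℝ))) := by
        rw [← setLIntegral_Icc_rpow_neg_half (by positivity)]
        gcongr
        exact setLIntegral_Ioo_comp_abs_le (fun t => ENNReal.ofReal (t ^ (-(1 / 2) : ℝ))) _
    _ ≤ ENNReal.ofReal (4 * K * (r * L ^ lam)) := by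
        rw [← ENNReal.ofReal_ofNat 2, ← ENNReal.ofReal_mul zero_le_two, ← ENNReal.ofReal_mul hc]
        refine ENNReal.ofReal_le_ofReal ?_
        have hsq : r ^ (1 / 2 : ℝ) * r ^ (1 / 2 : ℝ) = r := by
          rw [← rpow_add hr0]; norm_num
        calc c * (2 * (2 * (r / 2) ^ (1 / 2 : ℝ)))
            = 4 * c * (r / 2) ^ (1 / 2 : ℝ) := by ring
          _ ≤ 4 * c * r ^ (1 / 2 : ℝ) := by gcongr; linarith
          _ = 4 * K * (r * L ^ lam) := by linear_combination (4 * K * L ^ lam) * hsq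

lemma muW_prod (lam : ℝ) (A B : Set ℝ) :
    muW lam (A ×ˢ B) = volume A * ∫⁻ t in B, ENNReal.ofReal (logWeight lam t) := by
  have hw : Measurable fun x : ℝ × ℝ => ENNReal.ofReal (wlam lam x) :=
    (measurable_logWeight lam).ennreal_ofReal.comp measurable_snd
  rw [muW, withDensity_apply', Measure.volume_eq_prod, ← Measure.prod_restrict,
    lintegral_prod _ hw.aemeasurable]
  simp only [wlam, lintegral_const, Measure.restrict_apply_univ]
  exact mul_comm _ _

/-- For `λ > 0` there are constants `0 < c ≤ C`, depending only on
`λ`, such that for every boundary point `(x₁, 0)` and every `0 < r < e^{-2λ}`, the open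
axis-parallel square `Q((x₁,0), r)` of side length `r` satisfies
`c r² (log(e/r))^λ ≤ μ(Q) ≤ C r² (log(e/r))^λ`. -/
theorem muW_square_estimate (lam : ℝ) (hlam : 0 < lam) :
    ∃ c C : ℝ, 0 < c ∧ c ≤ C ∧
      ∀ x₁ r : ℝ, 0 < r → r < Real.exp (-(2 * lam)) →
        ENNReal.ofReal (c * r ^ 2 * Real.log (Real.exp 1 / r) ^ lam) ≤
          muW lam (Set.Ioo (x₁ - r / 2) (x₁ + r / 2) ×ˢ Set.Ioo (-(r / 2)) (r / 2)) ∧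
        muW lam (Set.Ioo (x₁ - r / 2) (x₁ + r / 2) ×ˢ Set.Ioo (-(r / 2)) (r / 2)) ≤
          ENNReal.ofReal (C * r ^ 2 * Real.log (Real.exp 1 / r) ^ lam) := by
  refine ⟨1, 4 * max 1 (2 * lam) ^ lam, one_pos, ?_, fun x₁ r hr0 hr => ?_⟩
  · linarith [one_le_rpow (le_max_left 1 (2 * lam)) hlam.le]
  have hr1 : r ≤ 1 := hr.le.trans (exp_le_one_iff.2 (by linarith))
  have hmu : muW lam (Ioo (x₁ - r / 2) (x₁ + r / 2) ×ˢ Ioo (-(r / 2)) (r / 2)) =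
      ENNReal.ofReal r * ∫⁻ t in Ioo (-(r / 2)) (r / 2), ENNReal.ofReal (logWeight lam t) := by
    rw [muW_prod, Real.volume_Ioo, add_sub_sub_cancel, add_halves]
  rw [hmu]
  constructor
  · calc ENNReal.ofReal (1 * r ^ 2 * log (exp 1 / r) ^ lam)
        = ENNReal.ofReal r * ENNReal.ofReal (r * log (exp 1 / r) ^ lam) := by
          rw [← ENNReal.ofReal_mul hr0.le]; ring_nf
      _ ≤ _ := by
          gcongr
          exact ofReal_le_setLIntegral_logWeight hlam.le hr0 (hr1.trans (one_le_exp zero_le_one))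
  · calc _ ≤ ENNReal.ofReal r *
          ENNReal.ofReal (4 * max 1 (2 * lam) ^ lam * (r * log (exp 1 / r) ^ lam)) := by
          gcongr
          exact setLIntegral_logWeight_le hlam hr0 hr1
      _ = _ := by rw [← ENNReal.ofReal_mul hr0.le]; ring_nf
end

section
/- Let λ > 0 and on ℝ² define the measure dμ := w_λ dm₂ with w_λ(x₁,x₂) := (log(max{e, e/|x₂|}))^λ. Then there is a constant c > 0, depending only on λ, such that for every interval [a,b] ⊂ ℝ with a < b and every 0 < R < e^{−2λ}, every countable family of balls B(x_j, r_j) ⊂ ℝ² with 0 < r_j ≤ R whose union covers the segment [a,b]×{0} satisfies Σ_j μ(B(x_j, r_j))/r_j ≥ c·(b−a)·(log(e/R))^λ. Consequently, the codimension-1 Hausdorff measure ℋ (taken with respect to μ) of any nondegenerate segment [a,b]×{0} of the boundary ∂ℝ²₊ = ℝ×{0} is infinite; in particular ℋ is not σ-finite on ∂ℝ²₊. -/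
open MeasureTheory Metric ENNReal

/-- The restricted spherical Hausdorff content of codimension `1` at scale `R`,
with respect to the measure `μ`:
`ℋ_R(A) = inf { Σ_j μ(B(x_j,r_j))/r_j : A ⊆ ⋃_j B(x_j,r_j), 0 < r_j ≤ R }`. -/
noncomputable def codimContent (μ : Measure (ℝ × ℝ)) (A : Set (ℝ × ℝ)) (R : ℝ) :
    ℝ≥0∞ :=
  ⨅ (x : ℕ → ℝ × ℝ) (rad : ℕ → ℝ) (_ : ∀ j, 0 < rad j ∧ rad j ≤ R)
    (_ : A ⊆ ⋃ j, ball (x j) (rad j)),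
    ∑' j, μ (ball (x j) (rad j)) / ENNReal.ofReal (rad j)

/-- The codimension `1` Hausdorff measure `ℋ(A) = lim_{R→0⁺} ℋ_R(A)`; since the
content is nonincreasing in `R`, the limit equals the supremum over `R > 0`. -/
noncomputable def codimHausdorff (μ : Measure (ℝ × ℝ)) (A : Set (ℝ × ℝ)) : ℝ≥0∞ :=
  ⨆ (R : ℝ) (_ : 0 < R), codimContent μ A R

lemma wl_lb' (lam R : ℝ) (hlam : 0 < lam) (hR0 : 0 < R) (hR1 : R ≤ 1)
    (y : ℝ) (hy : y ≠ 0) (hy2 : |y| ≤ 2 * R) :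
    (Real.log (Real.exp 1 / R) / (1 + Real.log 2)) ^ lam
      ≤ Real.log (max (Real.exp 1) (Real.exp 1 / |y|)) ^ lam := by
  have hlog2 : (0:ℝ) < Real.log 2 := Real.log_pos one_lt_two
  have hL : Real.log (Real.exp 1 / R) = 1 - Real.log R := by
    rw [Real.log_div (Real.exp_pos 1).ne' hR0.ne', Real.log_exp]
  have hLpos : (1:ℝ) ≤ Real.log (Real.exp 1 / R) := by
    have := Real.log_nonpos hR0.le hR1; linarith
  set L := Real.log (Real.exp 1 / R) with hLdef
  have hbase : L / (1 + Real.log 2) ≤ Real.log (max (Real.exp 1) (Real.exp 1 / |y|)) := by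
    have hyp : 0 < |y| := abs_pos.mpr hy
    have h1 : (1:ℝ) ≤ Real.log (max (Real.exp 1) (Real.exp 1 / |y|)) := by
      calc (1:ℝ) = Real.log (Real.exp 1) := (Real.log_exp 1).symm
        _ ≤ _ := Real.log_le_log (Real.exp_pos 1) (le_max_left _ _)
    have h2 : L - Real.log 2 ≤ Real.log (max (Real.exp 1) (Real.exp 1 / |y|)) := by
      have he : Real.exp 1 / (2 * R) ≤ Real.exp 1 / |y| := by
        gcongr
      have h3 : Real.log (Real.exp 1 / (2 * R)) ≤ Real.log (max (Real.exp 1) (Real.exp 1 / |y|)) := by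
        apply Real.log_le_log (by positivity)
        exact le_trans he (le_max_right _ _)
      have h4 : Real.log (Real.exp 1 / (2 * R)) = 1 - Real.log 2 - Real.log R := by
        rw [Real.log_div (Real.exp_pos 1).ne' (by positivity), Real.log_exp,
          Real.log_mul two_ne_zero hR0.ne']
        ring
      linarith [h3, h4, hL]
    rcases le_total L (1 + Real.log 2) with h | h
    · have : L / (1 + Real.log 2) ≤ 1 := by
        rw [div_le_one (by positivity)]; exact h
      linarith
    · have : L / (1 + Real.log 2) ≤ L - Real.log 2 := by
        rw [div_le_iff₀ (by positivity)]; nlinarith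
      linarith
  exact Real.rpow_le_rpow (by positivity) hbase hlam.le

lemma axis_null : (volume : Measure (ℝ × ℝ)) {y : ℝ × ℝ | y.2 = 0} = 0 := by
  have h : {y : ℝ × ℝ | y.2 = 0} = (Set.univ : Set ℝ) ×ˢ ({0} : Set ℝ) := by
    ext y
    constructor
    · intro hy; exact ⟨Set.mem_univ _, hy⟩
    · intro hy; exact hy.2
  rw [h, Measure.volume_eq_prod, Measure.prod_prod]
  simp

lemma ball_lb (lam R r : ℝ) (hlam : 0 < lam) (hR0 : 0 < R) (hR1 : R ≤ 1)
    (hr0 : 0 < r) (hrR : r ≤ R) (z : ℝ × ℝ) (hz : |z.2| < r) :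
    ENNReal.ofReal ((Real.log (Real.exp 1 / R) / (1 + Real.log 2)) ^ lam)
      * (ENNReal.ofReal (2 * r) * ENNReal.ofReal (2 * r)) ≤ muW lam (ball z r) := by
  set W := (Real.log (Real.exp 1 / R) / (1 + Real.log 2)) ^ lam with hW
  have hvol : (volume : Measure (ℝ × ℝ)) (ball z r)
      = ENNReal.ofReal (2*r) * ENNReal.ofReal (2*r) := by
    rw [← ball_prod_same z.1 z.2 r, Measure.volume_eq_prod, Measure.prod_prod,
      Real.volume_ball, Real.volume_ball]
  rw [muW, withDensity_apply _ measurableSet_ball]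
  calc ENNReal.ofReal W * (ENNReal.ofReal (2*r) * ENNReal.ofReal (2*r))
      = ∫⁻ _ in ball z r, ENNReal.ofReal W := by rw [setLIntegral_const, hvol]
    _ ≤ ∫⁻ y in ball z r, ENNReal.ofReal (wlam lam y) := by
        apply lintegral_mono_ae
        have hne : ∀ᵐ y : ℝ × ℝ ∂(volume.restrict (ball z r)), y.2 ≠ 0 := by
          apply Filter.Eventually.filter_mono (ae_mono Measure.restrict_le_self)
          rw [ae_iff]
          simpa using axis_null
        filter_upwards [ae_restrict_mem measurableSet_ball, hne] with y hy hy0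
        apply ENNReal.ofReal_le_ofReal
        apply wl_lb' lam R hlam hR0 hR1 _ hy0
        have h1 : dist y.2 z.2 < r :=
          lt_of_le_of_lt (le_trans (le_max_right _ _) (le_of_eq Prod.dist_eq.symm)) (mem_ball.mp hy)
        have habs : |y.2| ≤ |y.2 - z.2| + |z.2| := by
          calc |y.2| = |(y.2 - z.2) + z.2| := by ring_nf
            _ ≤ _ := abs_add_le _ _
        rw [Real.dist_eq] at h1
        nlinarith

lemma key_lb (lam : ℝ) (hlam : 0 < lam) (A : Set ℝ) (R : ℝ) (hR0 : 0 < R) (hR1 : R ≤ 1)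
    (x : ℕ → ℝ × ℝ) (rad : ℕ → ℝ) (hrad : ∀ j, 0 < rad j ∧ rad j ≤ R)
    (hcov : A ×ˢ ({0} : Set ℝ) ⊆ ⋃ j, ball (x j) (rad j)) :
    ENNReal.ofReal (2 * (Real.log (Real.exp 1 / R) / (1 + Real.log 2)) ^ lam) * volume A ≤
      ∑' j, muW lam (ball (x j) (rad j)) / ENNReal.ofReal (rad j) := by
  set W := (Real.log (Real.exp 1 / R) / (1 + Real.log 2)) ^ lam with hWdef
  have hWpos : 0 < W := by
    have hL : Real.log (Real.exp 1 / R) = 1 - Real.log R := by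
      rw [Real.log_div (Real.exp_pos 1).ne' hR0.ne', Real.log_exp]
    have : 0 < Real.log (Real.exp 1 / R) := by
      have := Real.log_nonpos hR0.le hR1; rw [hL]; linarith
    have h2 : (0:ℝ) < 1 + Real.log 2 := by
      have := Real.log_pos one_lt_two; linarith
    positivity
  set I : ℕ → Set ℝ := fun j => if |(x j).2| < rad j then ball (x j).1 (rad j) else ∅ with hI
  -- A is covered by the shadows
  have hAcov : A ⊆ ⋃ j, I j := by
    intro t ht
    obtain ⟨s, ⟨j, rfl⟩, hts⟩ := hcov (Set.mk_mem_prod ht rfl)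
    have hts' : (t, (0:ℝ)) ∈ ball (x j).1 (rad j) ×ˢ ball (x j).2 (rad j) := by
      rw [ball_prod_same]; rwa [Prod.mk.eta]
    have h1 : dist t (x j).1 < rad j := mem_ball.mp hts'.1
    have h2 : dist (0:ℝ) (x j).2 < rad j := mem_ball.mp hts'.2
    rw [Real.dist_eq, zero_sub, abs_neg] at h2
    refine Set.mem_iUnion.mpr ⟨j, ?_⟩
    rw [hI]
    simp only [h2, if_true]
    exact mem_ball.mpr h1
  -- termwise bound
  have hterm : ∀ j, ENNReal.ofReal (2 * W) * volume (I j)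
      ≤ muW lam (ball (x j) (rad j)) / ENNReal.ofReal (rad j) := by
    intro j
    by_cases hj : |(x j).2| < rad j
    · have hIj : volume (I j) = ENNReal.ofReal (2 * rad j) := by
        rw [hI]; simp only [hj, if_true]; exact Real.volume_ball _ _
      rw [hIj]
      have hr0 := (hrad j).1
      have hball := ball_lb lam R (rad j) hlam hR0 hR1 hr0 (hrad j).2 (x j) hj
      rw [ENNReal.le_div_iff_mul_le (Or.inl (by simp [hr0])) (Or.inl ENNReal.ofReal_ne_top)]
      have e1 : ENNReal.ofReal (2*W) * ENNReal.ofReal (2*rad j) * ENNReal.ofReal (rad j)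
          = ENNReal.ofReal (2*W*(2*rad j)*(rad j)) := by
        rw [← ENNReal.ofReal_mul (by positivity), ← ENNReal.ofReal_mul (by positivity)]
      have e2 : ENNReal.ofReal W * (ENNReal.ofReal (2*rad j) * ENNReal.ofReal (2*rad j))
          = ENNReal.ofReal (W*((2*rad j)*(2*rad j))) := by
        rw [← ENNReal.ofReal_mul (by positivity), ← ENNReal.ofReal_mul hWpos.le]
      rw [e1, (by congr 1; ring :
        ENNReal.ofReal (2*W*(2*rad j)*(rad j)) = ENNReal.ofReal (W*((2*rad j)*(2*rad j)))), ← e2]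
      exact hball
    · have : volume (I j) = 0 := by rw [hI]; simp [hj]
      simp [this]
  calc ENNReal.ofReal (2 * W) * volume A
      ≤ ENNReal.ofReal (2 * W) * ∑' j, volume (I j) := by
        apply mul_le_mul_right
        exact le_trans (measure_mono hAcov) (measure_iUnion_le _)
    _ = ∑' j, ENNReal.ofReal (2 * W) * volume (I j) := ENNReal.tsum_mul_left.symm
    _ ≤ _ := ENNReal.tsum_le_tsum hterm

lemma codimContent_mono (μ : Measure (ℝ × ℝ)) {A B : Set (ℝ × ℝ)} (hAB : A ⊆ B) (R : ℝ) :
    codimContent μ A R ≤ codimContent μ B R := by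
  refine le_iInf fun x => le_iInf fun rad => le_iInf fun h1 => le_iInf fun h2 => ?_
  exact iInf_le_of_le x <| iInf_le_of_le rad <| iInf_le_of_le h1 <|
    iInf_le_of_le (hAB.trans h2) le_rfl

lemma codimHausdorff_mono (μ : Measure (ℝ × ℝ)) {A B : Set (ℝ × ℝ)} (hAB : A ⊆ B) :
    codimHausdorff μ A ≤ codimHausdorff μ B := by
  refine iSup_mono fun R => iSup_mono fun _ => codimContent_mono μ hAB R

lemma content_lb (lam : ℝ) (hlam : 0 < lam) (A : Set ℝ) (R : ℝ) (hR0 : 0 < R) (hR1 : R ≤ 1) :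
    ENNReal.ofReal (2 * (Real.log (Real.exp 1 / R) / (1 + Real.log 2)) ^ lam) * volume A ≤
      codimContent (muW lam) (A ×ˢ ({0} : Set ℝ)) R := by
  refine le_iInf fun x => le_iInf fun rad => le_iInf fun h1 => le_iInf fun h2 => ?_
  exact key_lb lam hlam A R hR0 hR1 x rad h1 h2

lemma hausdorff_top (lam : ℝ) (hlam : 0 < lam) (A : Set ℝ) (hA : 0 < volume A) :
    codimHausdorff (muW lam) (A ×ˢ ({0} : Set ℝ)) = ⊤ := by
  have hlog2 : (0:ℝ) < 1 + Real.log 2 := by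
    have := Real.log_pos one_lt_two; linarith
  obtain ⟨ε, hε0, hεle⟩ : ∃ ε : ℝ, 0 < ε ∧ ENNReal.ofReal ε ≤ volume A := by
    rcases eq_or_ne (volume A) ⊤ with h | h
    · exact ⟨1, one_pos, by rw [h]; exact le_top⟩
    · exact ⟨(volume A).toReal, ENNReal.toReal_pos hA.ne' h,
        le_of_eq (ENNReal.ofReal_toReal h)⟩
  have hM : ∀ M : ℝ, ENNReal.ofReal M ≤ codimHausdorff (muW lam) (A ×ˢ ({0} : Set ℝ)) := by
    intro M
    set T := max 1 (M / (2 * ε)) with hT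
    have hT1 : (1:ℝ) ≤ T := le_max_left _ _
    have hT0 : (0:ℝ) < T := lt_of_lt_of_le one_pos hT1
    set s := max 1 ((1 + Real.log 2) * T ^ (1/lam)) with hs
    have hs1 : (1:ℝ) ≤ s := le_max_left _ _
    set R := Real.exp (-s) with hR
    have hR0 : 0 < R := Real.exp_pos _
    have hR1 : R ≤ 1 := by
      rw [hR]
      apply le_of_lt (Real.exp_lt_one_iff.mpr (by linarith))
    have hL : Real.log (Real.exp 1 / R) = 1 + s := by
      rw [hR, Real.log_div (Real.exp_pos 1).ne' (Real.exp_pos _).ne', Real.log_exp,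
        Real.log_exp]
      ring
    have hWge : M / (2 * ε) ≤ (Real.log (Real.exp 1 / R) / (1 + Real.log 2)) ^ lam := by
      have hTp : (0:ℝ) ≤ T ^ (1/lam) := Real.rpow_nonneg hT0.le _
      have h1 : T ^ (1/lam) ≤ Real.log (Real.exp 1 / R) / (1 + Real.log 2) := by
        rw [hL, le_div_iff₀ hlog2]
        have : (1 + Real.log 2) * T ^ (1/lam) ≤ s := le_max_right _ _
        linarith [this]
      have h2 : (T ^ (1/lam)) ^ lam ≤ (Real.log (Real.exp 1 / R) / (1 + Real.log 2)) ^ lam :=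
        Real.rpow_le_rpow hTp h1 hlam.le
      have h3 : (T ^ (1/lam)) ^ lam = T := by
        rw [← Real.rpow_mul hT0.le, one_div, inv_mul_cancel₀ hlam.ne', Real.rpow_one]
      calc M / (2 * ε) ≤ T := le_max_right _ _
        _ = (T ^ (1/lam)) ^ lam := h3.symm
        _ ≤ _ := h2
    have hMle : M ≤ 2 * (Real.log (Real.exp 1 / R) / (1 + Real.log 2)) ^ lam * ε := by
      have := mul_le_mul_of_nonneg_right hWge (by positivity : (0:ℝ) ≤ 2 * ε)
      rw [div_mul_cancel₀ _ (by positivity : (2:ℝ) * ε ≠ 0)] at this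
      nlinarith [this]
    have hbase : 0 ≤ Real.log (Real.exp 1 / R) / (1 + Real.log 2) := by
      rw [hL]; positivity
    have hWnn : 0 ≤ (Real.log (Real.exp 1 / R) / (1 + Real.log 2)) ^ lam :=
      Real.rpow_nonneg hbase _
    calc ENNReal.ofReal M
        ≤ ENNReal.ofReal (2 * (Real.log (Real.exp 1 / R) / (1 + Real.log 2)) ^ lam * ε) :=
          ENNReal.ofReal_le_ofReal hMle
      _ = ENNReal.ofReal (2 * (Real.log (Real.exp 1 / R) / (1 + Real.log 2)) ^ lam)
          * ENNReal.ofReal ε := ENNReal.ofReal_mul (by linarith)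
      _ ≤ ENNReal.ofReal (2 * (Real.log (Real.exp 1 / R) / (1 + Real.log 2)) ^ lam)
          * volume A := mul_le_mul_right hεle _
      _ ≤ codimContent (muW lam) (A ×ˢ ({0} : Set ℝ)) R := content_lb lam hlam A R hR0 hR1
      _ ≤ codimHausdorff (muW lam) (A ×ˢ ({0} : Set ℝ)) :=
          le_iSup₂_of_le R hR0 le_rfl
  by_contra h
  have hne : codimHausdorff (muW lam) (A ×ˢ ({0} : Set ℝ)) ≠ ⊤ := h
  have h1 := hM ((codimHausdorff (muW lam) (A ×ˢ ({0} : Set ℝ))).toReal + 1)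
  have h2 : codimHausdorff (muW lam) (A ×ˢ ({0} : Set ℝ))
      < ENNReal.ofReal ((codimHausdorff (muW lam) (A ×ˢ ({0} : Set ℝ))).toReal + 1) := by
    conv_lhs => rw [← ENNReal.ofReal_toReal hne]
    have ht0 := ENNReal.toReal_nonneg (a := codimHausdorff (muW lam) (A ×ˢ ({0} : Set ℝ)))
    exact (ENNReal.ofReal_lt_ofReal_iff (by linarith)).mpr (by linarith)
  exact absurd h1 (not_le.mpr h2)


/-- For `λ > 0` there is `c > 0`, depending only on `λ`, such that
every countable cover by balls of radii `≤ R < e^{-2λ}` of a boundary segment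
`[a,b]×{0}` satisfies `Σ_j μ(B_j)/r_j ≥ c (b−a)(log(e/R))^λ`. Consequently the
codimension `1` Hausdorff measure (with respect to `μ = w_λ m₂`) of every nondegenerate
boundary segment is infinite; in particular it is not σ-finite on `∂ℝ²₊ = ℝ×{0}`. -/
theorem codimHausdorff_infinite (lam : ℝ) (hlam : 0 < lam) :
    (∃ c > (0 : ℝ), ∀ a b : ℝ, a < b → ∀ R : ℝ, 0 < R → R < Real.exp (-(2 * lam)) →
      ∀ (x : ℕ → ℝ × ℝ) (rad : ℕ → ℝ), (∀ j, 0 < rad j ∧ rad j ≤ R) →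
        (Set.Icc a b ×ˢ ({0} : Set ℝ) ⊆ ⋃ j, ball (x j) (rad j)) →
        ENNReal.ofReal (c * (b - a) * Real.log (Real.exp 1 / R) ^ lam) ≤
          ∑' j, muW lam (ball (x j) (rad j)) / ENNReal.ofReal (rad j)) ∧
    (∀ a b : ℝ, a < b →
      codimHausdorff (muW lam) (Set.Icc a b ×ˢ ({0} : Set ℝ)) = ⊤) ∧
    ¬ ∃ S : ℕ → Set (ℝ × ℝ), ({p : ℝ × ℝ | p.2 = 0} ⊆ ⋃ n, S n) ∧
        ∀ n, codimHausdorff (muW lam) (S n) < ⊤ := by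
  have hlog2 : (0:ℝ) < 1 + Real.log 2 := by
    have := Real.log_pos one_lt_two; linarith
  refine ⟨⟨2 / (1 + Real.log 2) ^ lam, ?_, ?_⟩, ?_, ?_⟩
  · have := Real.rpow_pos_of_pos hlog2 lam
    positivity
  · intro a b hab R hR0 hRe x rad h1 h2
    have hR1 : R ≤ 1 := by
      have : Real.exp (-(2 * lam)) < 1 := Real.exp_lt_one_iff.mpr (by linarith)
      linarith
    have hLnn : 0 ≤ Real.log (Real.exp 1 / R) := by
      rw [Real.log_div (Real.exp_pos 1).ne' hR0.ne', Real.log_exp]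
      have := Real.log_nonpos hR0.le hR1
      linarith
    have e : 2 / (1 + Real.log 2) ^ lam * (b - a) * Real.log (Real.exp 1 / R) ^ lam
        = 2 * (Real.log (Real.exp 1 / R) / (1 + Real.log 2)) ^ lam * (b - a) := by
      rw [Real.div_rpow hLnn hlog2.le]
      ring
    have hWnn : 0 ≤ 2 * (Real.log (Real.exp 1 / R) / (1 + Real.log 2)) ^ lam := by
      have := Real.rpow_nonneg (by positivity : 0 ≤ Real.log (Real.exp 1 / R) / (1 + Real.log 2)) lam
      linarith
    rw [e, ENNReal.ofReal_mul hWnn, ← Real.volume_Icc (a := a) (b := b)]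
    exact key_lb lam hlam (Set.Icc a b) R hR0 hR1 x rad h1 h2
  · intro a b hab
    apply hausdorff_top lam hlam
    rw [Real.volume_Icc]
    exact ENNReal.ofReal_pos.mpr (by linarith)
  · rintro ⟨S, hScov, hSfin⟩
    set A : ℕ → Set ℝ := fun n => {t : ℝ | (t, (0:ℝ)) ∈ S n} with hA
    have hU : (Set.univ : Set ℝ) ⊆ ⋃ n, A n := by
      intro t _
      have ht : ((t, (0:ℝ)) : ℝ × ℝ) ∈ {p : ℝ × ℝ | p.2 = 0} := rfl
      obtain ⟨s, ⟨n, rfl⟩, h⟩ := hScov ht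
      exact Set.mem_iUnion.mpr ⟨n, h⟩
    have htop : (⊤ : ℝ≥0∞) ≤ ∑' n, volume (A n) := by
      calc (⊤ : ℝ≥0∞) = volume (Set.univ : Set ℝ) := Real.volume_univ.symm
        _ ≤ volume (⋃ n, A n) := measure_mono hU
        _ ≤ _ := measure_iUnion_le _
    have hex : ∃ n, volume (A n) ≠ 0 := by
      by_contra hall
      push_neg at hall
      rw [show (∑' n, volume (A n)) = 0 by simp [hall]] at htop
      exact absurd htop (by simp)
    obtain ⟨n, hn⟩ := hex
    have hpos : 0 < volume (A n) := pos_iff_ne_zero.mpr hn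
    have hsub : A n ×ˢ ({0} : Set ℝ) ⊆ S n := by
      intro p hp
      have h2 : p.2 = 0 := hp.2
      have h1 : (p.1, (0:ℝ)) ∈ S n := hp.1
      have : (p.1, (0:ℝ)) = p := Prod.ext rfl h2.symm
      rwa [this] at h1
    have := (hausdorff_top lam hlam (A n) hpos) ▸ codimHausdorff_mono (muW lam) hsub
    exact absurd (hSfin n) (not_lt.mpr this)
end

section
/- Let λ > 0 and on ℝ² define the weight w_λ(x₁,x₂) := (log(max{e, e/|x₂|}))^λ and the measure dμ := w_λ dm₂. Then there is a constant C, depending only on λ, such that for every z ∈ ℝ² and every r > 0, μ(B(z,r)) ≤ C·r²·inf_{x ∈ B(z,r)} w_λ(x); in other words, w_λ is a Muckenhoupt A₁-weight on ℝ². -/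
/-!
Write `ℓ(t) = log max(e, e/|t|) = max(1, 1 - log|t|)`, so that `w_λ(x) = ℓ(x₂)^λ` and `μ` is
the product of Lebesgue measure in `x₁` with `ℓ^λ dt` in `x₂`; a ball is a product of two
intervals of length `2r`, so it suffices to prove the one-dimensional `A₁` inequality for `ℓ^λ`.

Three properties of `w = ℓ^λ` suffice: `w` is nonincreasing in `|t|`; it is submultiplicative,
because `ℓ(ab) ≤ ℓ(a) + ℓ(b) - 1 ≤ ℓ(a) ℓ(b)`; and it is integrable near `0`, since
`ℓ(t) ≤ (1 + 2λ) |t|^{-1/(2λ)}` for `|t| ≤ 1`. Scaling and submultiplicativity give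
`∫_{-R}^{R} w ≤ R w(R) ∫_{-1}^{1} w`, which handles intervals `(c - r, c + r)` with `|c| ≤ 2r`.
If `|c| > 2r`, then `|s| ≤ 3|t|` for all `s, t` in the interval, so
`w(t) ≤ w(1/3) w(3t) ≤ w(1/3) w(s)`.
-/

open MeasureTheory Metric

open Set ENNReal

noncomputable def logProfile (t : ℝ) : ℝ :=
  Real.log (max (Real.exp 1) (Real.exp 1 / |t|))

theorem logProfile_eq_max (t : ℝ) : logProfile t = max 1 (1 - Real.log |t|) := by
  rcases eq_or_ne t 0 with rfl | ht
  · simp [logProfile, (Real.exp_pos 1).le]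
  · have hpos : 0 < |t| := abs_pos.2 ht
    rw [logProfile, Real.strictMonoOn_log.monotoneOn.map_max (Real.exp_pos 1)
      (div_pos (Real.exp_pos 1) hpos),
      Real.log_exp, Real.log_div (Real.exp_ne_zero 1) hpos.ne', Real.log_exp]

theorem one_le_logProfile (t : ℝ) : 1 ≤ logProfile t :=
  (logProfile_eq_max t).symm ▸ le_max_left _ _

theorem logProfile_pos (t : ℝ) : 0 < logProfile t :=
  one_pos.trans_le (one_le_logProfile t)

theorem logProfile_mul_le (a b : ℝ) : logProfile (a * b) ≤ logProfile a * logProfile b := by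
  have ha := one_le_logProfile a
  have hb := one_le_logProfile b
  rcases eq_or_ne a 0 with rfl | ha0
  · rw [zero_mul]; nlinarith
  rcases eq_or_ne b 0 with rfl | hb0
  · rw [mul_zero]; nlinarith
  have hla : 1 - Real.log |a| ≤ logProfile a := (logProfile_eq_max a).symm ▸ le_max_right _ _
  have hlb : 1 - Real.log |b| ≤ logProfile b := (logProfile_eq_max b).symm ▸ le_max_right _ _
  -- `ℓ(a) + ℓ(b) - 1 ≤ ℓ(a) ℓ(b)` is `(ℓ(a) - 1)(ℓ(b) - 1) ≥ 0`
  rw [logProfile_eq_max (a * b), abs_mul, Real.log_mul (abs_ne_zero.2 ha0) (abs_ne_zero.2 hb0)]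
  exact max_le (by nlinarith) (by nlinarith)

theorem logProfile_le_of_abs_le {a b : ℝ} (ha : a ≠ 0) (hab : |a| ≤ |b|) :
    logProfile b ≤ logProfile a := by
  rw [logProfile_eq_max, logProfile_eq_max]
  have := Real.log_le_log (abs_pos.2 ha) hab
  exact max_le_max le_rfl (by linarith)

theorem logProfile_le_rpow {ε t : ℝ} (hε : 0 < ε) (ht0 : t ≠ 0) (ht1 : |t| ≤ 1) :
    logProfile t ≤ (1 + ε⁻¹) * |t| ^ (-ε) := by
  have hpos : 0 < |t| := abs_pos.2 ht0
  have hX : 1 ≤ |t| ^ (-ε) :=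
    Real.one_le_rpow_of_pos_of_le_one_of_nonpos hpos ht1 (neg_nonpos.2 hε.le)
  have hlog : Real.log |t|⁻¹ ≤ ε⁻¹ * |t| ^ (-ε) := by
    have := Real.log_le_rpow_div (inv_nonneg.2 hpos.le) hε
    rwa [Real.inv_rpow hpos.le, ← Real.rpow_neg hpos.le, div_eq_inv_mul] at this
  rw [Real.log_inv] at hlog
  rw [logProfile_eq_max]
  exact max_le (by nlinarith [inv_pos.2 hε]) (by nlinarith)

theorem measurable_logProfile : Measurable logProfile := by
  unfold logProfile; fun_prop

theorem logProfile_rpow_mul_le {lam : ℝ} (hlam : 0 ≤ lam) (a b : ℝ) :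
    logProfile (a * b) ^ lam ≤ logProfile a ^ lam * logProfile b ^ lam := by
  rw [← Real.mul_rpow (logProfile_pos a).le (logProfile_pos b).le]
  exact Real.rpow_le_rpow (logProfile_pos _).le (logProfile_mul_le a b) hlam

theorem logProfile_rpow_le_of_abs_le {lam : ℝ} (hlam : 0 ≤ lam) {a b : ℝ} (ha : a ≠ 0)
    (hab : |a| ≤ |b|) : logProfile b ^ lam ≤ logProfile a ^ lam :=
  Real.rpow_le_rpow (logProfile_pos b).le (logProfile_le_of_abs_le ha hab) hlam

theorem integrableOn_logProfile_rpow_ball {lam : ℝ} (hlam : 0 < lam) :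
    IntegrableOn (fun t => logProfile t ^ lam) (ball 0 1) := by
  have hε : 0 < (2 * lam)⁻¹ := by positivity
  have hexp : -(2 * lam)⁻¹ * lam = -(1 / 2) := by field_simp
  refine integrableOn_ball_of_norm_le_rpow (C := (1 + 2 * lam) ^ lam) (α := 1 / 2)
    (by simp) (by rw [Module.finrank_self]; norm_num) ?_
    (measurable_logProfile.pow_const lam).aestronglyMeasurable
  filter_upwards [ae_restrict_mem measurableSet_ball,
    ae_restrict_of_ae (volume.ae_ne 0)] with t ht ht0
  have ht1 : |t| ≤ 1 := by simpa using (mem_ball_zero_iff.1 ht).le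
  rw [Real.norm_eq_abs, abs_of_nonneg (Real.rpow_nonneg (logProfile_pos t).le _),
    Real.norm_eq_abs, ← hexp, Real.rpow_mul (abs_nonneg t),
    ← Real.mul_rpow (by positivity) (by positivity)]
  have hbound := logProfile_le_rpow hε ht0 ht1
  rw [inv_inv] at hbound
  exact Real.rpow_le_rpow (logProfile_pos t).le hbound hlam.le

theorem setLIntegral_ball_zero_eq_ofReal_mul_comp (f : ℝ → ℝ≥0∞) {R : ℝ} (hR : 0 < R) :
    ∫⁻ t in ball 0 R, f t = ENNReal.ofReal R * ∫⁻ u in ball 0 1, f (R * u) := by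
  have himage : (R * ·) '' ball (0 : ℝ) 1 = ball 0 R := by
    rw [Real.ball_eq_Ioo, Real.ball_eq_Ioo, image_mul_left_Ioo hR]; simp
  rw [← himage, lintegral_image_eq_lintegral_abs_deriv_mul (f' := fun _ => R) measurableSet_ball
    (fun u _ => by simpa using ((hasDerivAt_id u).const_mul R).hasDerivWithinAt)
    (mul_right_injective₀ hR.ne').injOn, ← lintegral_const_mul' _ _ ofReal_ne_top]
  simp [abs_of_pos hR]

section Submultiplicative

variable {w : ℝ → ℝ}

theorem setLIntegral_ball_zero_le_of_submultiplicative (hw0 : ∀ t, 0 ≤ w t)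
    (hmul : ∀ a b, w (a * b) ≤ w a * w b) (hint : IntegrableOn w (ball 0 1)) {R : ℝ}
    (hR : 0 < R) :
    ∫⁻ t in ball 0 R, ENNReal.ofReal (w t)
      ≤ ENNReal.ofReal (R * w R * ∫ u in ball 0 1, w u) := by
  rw [setLIntegral_ball_zero_eq_ofReal_mul_comp _ hR]
  calc ENNReal.ofReal R * ∫⁻ u in ball 0 1, ENNReal.ofReal (w (R * u))
      ≤ ENNReal.ofReal R * ∫⁻ u in ball 0 1, ENNReal.ofReal (w R) * ENNReal.ofReal (w u) := by
        gcongr with u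
        rw [← ENNReal.ofReal_mul (hw0 R)]
        exact ENNReal.ofReal_le_ofReal (hmul R u)
    _ = ENNReal.ofReal (R * w R * ∫ u in ball 0 1, w u) := by
        rw [lintegral_const_mul' _ _ ofReal_ne_top,
          ← ofReal_integral_eq_lintegral_ofReal hint (ae_of_all _ hw0),
          ENNReal.ofReal_mul (mul_nonneg hR.le (hw0 R)), ENNReal.ofReal_mul hR.le, mul_assoc]

theorem setLIntegral_ball_le_of_submultiplicative (hw0 : ∀ t, 0 ≤ w t)
    (hmul : ∀ a b, w (a * b) ≤ w a * w b) (hanti : ∀ a b, a ≠ 0 → |a| ≤ |b| → w b ≤ w a)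
    (hint : IntegrableOn w (ball 0 1)) {c r s : ℝ} (hs : s ∈ ball c r) (hs0 : s ≠ 0) :
    ∫⁻ t in ball c r, ENNReal.ofReal (w t)
      ≤ ENNReal.ofReal ((3 * (∫ u in ball 0 1, w u) + 2 * w 3⁻¹) * r * w s) := by
  set J := ∫ u in ball 0 1, w u
  have hJ : 0 ≤ J := setIntegral_nonneg measurableSet_ball fun u _ => hw0 u
  have hr : 0 < r := pos_of_mem_ball hs
  have hsc : |s - c| < r := by rwa [mem_ball, Real.dist_eq] at hs
  have hs_le : |s| < |c| + r := by linarith [abs_sub_abs_le_abs_sub s c]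
  have hws := hw0 s
  have hw3 := hw0 3⁻¹
  rcases le_or_gt |c| (2 * r) with hnear | hfar
  · have hsub : ball c r ⊆ ball 0 (3 * r) := fun t ht => by
      rw [mem_ball, dist_zero_right, Real.norm_eq_abs]
      rw [mem_ball, Real.dist_eq] at ht
      linarith [abs_sub_abs_le_abs_sub t c]
    have hw3r : w (3 * r) ≤ w s :=
      hanti s (3 * r) hs0 (by rw [abs_of_pos (by positivity : (0 : ℝ) < 3 * r)]; linarith)
    calc ∫⁻ t in ball c r, ENNReal.ofReal (w t)
        ≤ ∫⁻ t in ball 0 (3 * r), ENNReal.ofReal (w t) := lintegral_mono_set hsub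
      _ ≤ ENNReal.ofReal (3 * r * w (3 * r) * J) :=
        setLIntegral_ball_zero_le_of_submultiplicative hw0 hmul hint (by positivity)
      _ ≤ ENNReal.ofReal ((3 * J + 2 * w 3⁻¹) * r * w s) := by
        refine ENNReal.ofReal_le_ofReal ?_
        nlinarith [mul_nonneg (mul_nonneg hr.le hJ) (sub_nonneg.2 hw3r),
          mul_nonneg (mul_nonneg hr.le hw3) hws]
  · have hpoint : ∀ t ∈ ball c r, ENNReal.ofReal (w t) ≤ ENNReal.ofReal (w 3⁻¹ * w s) := by
      intro t ht
      rw [mem_ball, Real.dist_eq] at ht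
      have hst : |s| ≤ |3 * t| := by
        rw [abs_mul, abs_of_pos (three_pos : (0 : ℝ) < 3)]
        linarith [abs_sub_abs_le_abs_sub c t, abs_sub_comm c t]
      refine ENNReal.ofReal_le_ofReal ?_
      calc w t = w (3⁻¹ * (3 * t)) := by rw [inv_mul_cancel_left₀ three_ne_zero]
        _ ≤ w 3⁻¹ * w (3 * t) := hmul _ _
        _ ≤ w 3⁻¹ * w s := mul_le_mul_of_nonneg_left (hanti s _ hs0 hst) hw3
    calc ∫⁻ t in ball c r, ENNReal.ofReal (w t)
        ≤ ∫⁻ _ in ball c r, ENNReal.ofReal (w 3⁻¹ * w s) :=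
          setLIntegral_mono measurable_const hpoint
      _ = ENNReal.ofReal (2 * w 3⁻¹ * r * w s) := by
        rw [setLIntegral_const, Real.volume_ball, ← ENNReal.ofReal_mul (by positivity)]
        congr 1
        ring
      _ ≤ ENNReal.ofReal ((3 * J + 2 * w 3⁻¹) * r * w s) := by
        refine ENNReal.ofReal_le_ofReal ?_
        nlinarith [mul_nonneg (mul_nonneg hr.le hJ) hws]

end Submultiplicative

theorem muW_ball (lam : ℝ) (z : ℝ × ℝ) (r : ℝ) :
    muW lam (ball z r)
      = ENNReal.ofReal (2 * r) * ∫⁻ t in ball z.2 r, ENNReal.ofReal (logProfile t ^ lam) := by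
  have hmeas : Measurable fun t => ENNReal.ofReal (logProfile t ^ lam) :=
    (measurable_logProfile.pow_const lam).ennreal_ofReal
  have hprod : muW lam
      = volume.prod (volume.withDensity fun t => ENNReal.ofReal (logProfile t ^ lam)) := by
    rw [prod_withDensity_right hmeas, ← Measure.volume_eq_prod]; rfl
  rw [hprod, ← ball_prod_same, Measure.prod_prod, Real.volume_ball,
    withDensity_apply _ measurableSet_ball]

/-- For `λ > 0` there is a constant `C`, depending only on `λ`, such
that `μ(B(z,r)) ≤ C r² w_λ(x)` for every ball `B(z,r) ⊆ ℝ²` and every point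
`x ∈ B(z,r)` with `x₂ ≠ 0`; that is, `μ(B(z,r)) ≤ C r² inf_{B(z,r)} w_λ`, so `w_λ` is
a Muckenhoupt `A₁`-weight on `ℝ²`. -/
theorem wlam_A1 (lam : ℝ) (hlam : 0 < lam) :
    ∃ C > (0 : ℝ), ∀ (z : ℝ × ℝ) (r : ℝ), 0 < r →
      ∀ x ∈ ball z r, x.2 ≠ 0 →
        muW lam (ball z r) ≤ ENNReal.ofReal (C * r ^ 2 * wlam lam x) := by
  set w : ℝ → ℝ := fun t => logProfile t ^ lam
  have hw0 (t : ℝ) : 0 ≤ w t := Real.rpow_nonneg (logProfile_pos t).le lam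
  set K := 3 * (∫ u in ball 0 1, w u) + 2 * w 3⁻¹
  have hK : 0 < K := by
    have := setIntegral_nonneg (μ := volume) measurableSet_ball fun u (_ : u ∈ ball 0 1) => hw0 u
    have := Real.rpow_pos_of_pos (logProfile_pos 3⁻¹) lam
    positivity
  refine ⟨2 * K, by positivity, fun z r hr x hx hx0 => ?_⟩
  rw [← ball_prod_same] at hx
  calc muW lam (ball z r)
      = ENNReal.ofReal (2 * r) * ∫⁻ t in ball z.2 r, ENNReal.ofReal (w t) := muW_ball lam z r
    _ ≤ ENNReal.ofReal (2 * r) * ENNReal.ofReal (K * r * w x.2) := by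
      gcongr
      exact setLIntegral_ball_le_of_submultiplicative hw0 (logProfile_rpow_mul_le hlam.le)
        (fun _ _ => logProfile_rpow_le_of_abs_le hlam.le) (integrableOn_logProfile_rpow_ball hlam)
        hx.2 hx0
    _ = ENNReal.ofReal (2 * K * r ^ 2 * wlam lam x) := by
      change _ = ENNReal.ofReal (2 * K * r ^ 2 * w x.2)
      rw [← ENNReal.ofReal_mul (by positivity)]
      congr 1
      ring
end
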